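/- arXiv:1912.03890 — 7 statements merged into one kernel-verified Lean document; each statement's English description precedes it below -/
import Mathlib

section
/- Let A be an n×n real matrix and B an n×r real matrix such that the pair (A,B) is controllable with controllability index m, i.e., the block matrix [B, AB, ..., A^(m-1)B] has rank n. Then for any n×n real matrix M, the pair (M + gA, B) is controllable with controllability index at most m for all but at most finitely many real scalars g. -/
open Matrix

open Polynomial in
private theorem rank_eq_iff_det' {n : ℕ} (E : Matrix (Fin n) (Fin n) ℝ) :
    E.rank = n ↔ E.det ≠ 0 := by
  constructor
  · intro h hdet
    have hsurj : Function.Surjective E.mulVec := by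
      have : LinearMap.range E.mulVecLin = ⊤ := by
        apply Submodule.eq_top_of_finrank_eq
        simpa [Matrix.rank] using h
      intro v
      exact LinearMap.range_eq_top.mp this v
    rw [Matrix.mulVec_surjective_iff_isUnit, Matrix.isUnit_iff_isUnit_det] at hsurj
    exact absurd hdet (isUnit_iff_ne_zero.mp hsurj)
  · intro h
    have : IsUnit E := (Matrix.isUnit_iff_isUnit_det E).mpr (isUnit_iff_ne_zero.mpr h)
    simpa using Matrix.rank_of_isUnit E this


/-- The controllability matrix `[B, AB, ..., A^(t-1) B]` (columns indexed by
`Fin t × R`). -/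
noncomputable def ctrbMat {N R : Type*} [Fintype N] [Fintype R] [DecidableEq N]
    (A : Matrix N N ℝ) (B : Matrix N R ℝ) (t : ℕ) : Matrix N (Fin t × R) ℝ :=
  fun i c => (A ^ (c.1 : ℕ) * B) i c.2

open Polynomial in
/-- If `(A, B)` is controllable with controllability index `m`, then for every
matrix `M`, the pair `(M + g • A, B)` is controllable with controllability index
at most `m` for all but finitely many real scalars `g`. -/
theorem stmt0 {n r m : ℕ}
    (A : Matrix (Fin n) (Fin n) ℝ) (B : Matrix (Fin n) (Fin r) ℝ)
    (hc : (ctrbMat A B m).rank = n)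
    (hmin : ∀ k < m, (ctrbMat A B k).rank ≠ n)
    (M : Matrix (Fin n) (Fin n) ℝ) :
    {g : ℝ | (ctrbMat (M + g • A) B m).rank ≠ n}.Finite := by
  classical
  set P : Matrix (Fin n) (Fin n) ℝ[X] := A.map C + M.map (fun a => X * C a) with hP
  set Q : Matrix (Fin n) (Fin m × Fin r) ℝ[X] :=
    Matrix.of (fun i c => (P ^ (c.1 : ℕ) * B.map C) i c.2) with hQ
  set q : ℝ[X] := (Q * Qᵀ).det with hq
  -- evaluation of P
  have hPev : ∀ h : ℝ, P.map (evalRingHom h) = A + h • M := by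
    intro h
    ext i j
    simp only [hP, Matrix.map_apply, Matrix.add_apply, Matrix.smul_apply, coe_evalRingHom,
      eval_add, eval_mul, eval_X, eval_C, smul_eq_mul]
  have hBev : ∀ h : ℝ, (B.map C).map (evalRingHom h) = B := by
    intro h
    ext i j
    simp [Matrix.map_apply]
  have hQev : ∀ h : ℝ, Q.map (evalRingHom h) = ctrbMat (A + h • M) B m := by
    intro h
    ext i c
    have hpow : (P ^ (c.1 : ℕ)).map (evalRingHom h) = (A + h • M) ^ (c.1 : ℕ) := by
      rw [← hPev h, ← RingHom.mapMatrix_apply, ← RingHom.mapMatrix_apply, ← map_pow]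
    calc (Q.map (evalRingHom h)) i c
        = ((P ^ (c.1 : ℕ) * B.map C).map (evalRingHom h)) i c.2 := by
          simp [hQ, Matrix.map_apply]
      _ = ((A + h • M) ^ (c.1 : ℕ) * B) i c.2 := by
          rw [Matrix.map_mul, hpow, hBev]
      _ = ctrbMat (A + h • M) B m i c := rfl
  have hqev : ∀ h : ℝ,
      q.eval h = ((ctrbMat (A + h • M) B m) * (ctrbMat (A + h • M) B m)ᵀ).det := by
    intro h
    have : q.eval h = (evalRingHom h) q := rfl
    rw [this, hq, RingHom.map_det, RingHom.mapMatrix_apply, Matrix.map_mul, Matrix.transpose_map, hQev h]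
  -- q is nonzero
  have hq0 : q ≠ 0 := by
    intro h0
    have := hqev 0
    rw [h0] at this
    simp only [zero_smul, add_zero, eval_zero] at this
    have hr : ((ctrbMat A B m) * (ctrbMat A B m)ᵀ).rank = n := by
      rw [Matrix.rank_self_mul_transpose]; exact hc
    exact ((rank_eq_iff_det' _).mp hr) this.symm
  have hfin : {h : ℝ | q.eval h = 0}.Finite := q.finite_setOf_isRoot hq0
  apply Set.Finite.subset ((hfin.image (fun x => x⁻¹)).insert 0)
  intro g hg
  simp only [Set.mem_setOf_eq] at hg
  by_contra hgm
  simp only [Set.mem_insert_iff, Set.mem_image, Set.mem_setOf_eq, not_or, not_exists] at hgm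
  obtain ⟨hgne, himg⟩ := hgm
  have hroot : q.eval g⁻¹ ≠ 0 := by
    intro h0
    exact himg g⁻¹ ⟨h0, by rw [inv_inv]⟩
  -- D has rank n
  have hD : (ctrbMat (A + g⁻¹ • M) B m).rank = n := by
    rw [← Matrix.rank_self_mul_transpose, rank_eq_iff_det']
    rw [hqev g⁻¹] at hroot
    exact hroot
  -- relate C(g) and D via column scaling
  have hCD : ctrbMat (M + g • A) B m
      = ctrbMat (A + g⁻¹ • M) B m * Matrix.diagonal (fun c : Fin m × Fin r => g ^ (c.1 : ℕ)) := by
    ext i c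
    rw [Matrix.mul_diagonal]
    have hsc : M + g • A = g • (A + g⁻¹ • M) := by
      rw [smul_add, smul_smul, mul_inv_cancel₀ hgne, one_smul, add_comm]
    calc ctrbMat (M + g • A) B m i c
        = ((g • (A + g⁻¹ • M)) ^ (c.1 : ℕ) * B) i c.2 := by rw [← hsc]; rfl
      _ = (g ^ (c.1 : ℕ) • ((A + g⁻¹ • M) ^ (c.1 : ℕ) * B)) i c.2 := by
          rw [_root_.smul_pow, Matrix.smul_mul]
      _ = ctrbMat (A + g⁻¹ • M) B m i c * g ^ (c.1 : ℕ) := by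
          simp [ctrbMat, Matrix.smul_apply, mul_comm]
  apply hg
  rw [hCD, Matrix.rank_mul_eq_left_of_isUnit_det]
  · exact hD
  · rw [Matrix.det_diagonal]
    exact isUnit_iff_ne_zero.mpr (Finset.prod_ne_zero_iff.mpr
      (fun c _ => pow_ne_zero _ hgne))
end

section
/- Let A be an n×n real matrix, B an n×r real matrix, and M an n×n real matrix. If (A,B) is controllable with controllability index m and mr = n, then for all but finitely many real scalars g, the controllability index of (M + gA, B) is exactly m. -/
open Matrix
open Polynomial

lemma rank_reindex_cols {l o p : Type*} [Fintype l] [Fintype o] [Fintype p]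
    (A : Matrix l o ℝ) (f : o ≃ p) :
    (Matrix.reindex (Equiv.refl l) f A).rank = A.rank := by
  rw [Matrix.rank, Matrix.rank, Matrix.mulVecLin_reindex, LinearMap.range_comp,
    LinearMap.range_comp, LinearEquiv.range, Submodule.map_top, LinearEquiv.finrank_map_eq]

lemma det_ne_zero_of_rank_eq {n : ℕ} (A : Matrix (Fin n) (Fin n) ℝ) (h : A.rank = n) :
    A.det ≠ 0 := by
  intro h0
  obtain ⟨v, hv, hAv⟩ := (Matrix.exists_mulVec_eq_zero_iff).2 h0
  have hker : v ∈ LinearMap.ker A.mulVecLin := by simpa using hAv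
  have h1 := LinearMap.finrank_range_add_finrank_ker A.mulVecLin
  have h2 : Module.finrank ℝ (LinearMap.range A.mulVecLin) = n := h
  have h3 : Module.finrank ℝ (Fin n → ℝ) = n := by simp
  have h4 : Module.finrank ℝ (LinearMap.ker A.mulVecLin) = 0 := by omega
  rw [Submodule.finrank_eq_zero] at h4
  rw [h4] at hker
  exact hv (by simpa using hker)

lemma rank_eq_of_det_ne_zero {n : ℕ} (A : Matrix (Fin n) (Fin n) ℝ) (h : A.det ≠ 0) :
    A.rank = n := by
  have := Matrix.rank_of_isUnit A ((Matrix.isUnit_iff_isUnit_det A).mpr (isUnit_iff_ne_zero.mpr h))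
  simpa using this

/-- Evaluating the polynomial controllability matrix of the pencil `A + X • M`. -/
lemma map_eval_ctrbPoly {n r m : ℕ} (A M : Matrix (Fin n) (Fin n) ℝ)
    (B : Matrix (Fin n) (Fin r) ℝ) (h : ℝ) :
    (Matrix.of (fun (i : Fin n) (c : Fin m × Fin r) =>
        ((A.map C + (X : ℝ[X]) • M.map C) ^ (c.1 : ℕ) * B.map C) i c.2)).map (eval h)
      = Matrix.of (fun (i : Fin n) (c : Fin m × Fin r) =>
        ((A + h • M) ^ (c.1 : ℕ) * B) i c.2) := by
  have hPmap : (A.map C + (X : ℝ[X]) • M.map C).map (eval h) = A + h • M := by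
    ext i j
    simp [Matrix.map_apply, Matrix.add_apply, Matrix.smul_apply, smul_eq_mul]
    ring
  have hPm : ∀ j : ℕ, ((A.map C + (X : ℝ[X]) • M.map C) ^ j).map (eval h) = (A + h • M) ^ j := by
    intro j
    have := map_pow ((evalRingHom h).mapMatrix) (A.map C + (X : ℝ[X]) • M.map C) j
    simp only [RingHom.mapMatrix_apply, coe_evalRingHom] at this
    rw [this, hPmap]
  ext i c
  have hmul : ((A.map C + (X : ℝ[X]) • M.map C) ^ (c.1 : ℕ) * B.map C).map (eval h)
      = (A + h • M) ^ (c.1 : ℕ) * B := by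
    rw [← coe_evalRingHom, Matrix.map_mul (f := evalRingHom h)]
    have hB : (B.map C).map ⇑(evalRingHom h) = B := by
      ext i j; simp [Matrix.map_apply]
    have := hPm (c.1 : ℕ)
    simp only [coe_evalRingHom] at hB ⊢
    rw [this, hB]
  exact congrFun (congrFun hmul i) c.2


/-- If `(A, B)` is controllable with controllability index `m` and `m * r = n`,
then for all but finitely many real scalars `g` the controllability index of
`(M + g • A, B)` is exactly `m`. -/
theorem stmt1 {n r m : ℕ}
    (A : Matrix (Fin n) (Fin n) ℝ) (B : Matrix (Fin n) (Fin r) ℝ)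
    (M : Matrix (Fin n) (Fin n) ℝ)
    (hc : (ctrbMat A B m).rank = n)
    (hmin : ∀ k < m, (ctrbMat A B k).rank ≠ n)
    (hmr : m * r = n) :
    {g : ℝ | ¬ ((ctrbMat (M + g • A) B m).rank = n ∧
        ∀ k < m, (ctrbMat (M + g • A) B k).rank ≠ n)}.Finite := by
  have e : (Fin m × Fin r) ≃ Fin n := finProdFinEquiv.trans (finCongr hmr)
  -- the minimality clause holds for every matrix
  have hk : ∀ (Y : Matrix (Fin n) (Fin n) ℝ), ∀ k < m, (ctrbMat Y B k).rank ≠ n := by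
    intro Y k hkm
    rcases Nat.eq_zero_or_pos r with hr | hr
    · have hn : n = 0 := by rw [← hmr, hr, Nat.mul_zero]
      have h1 : (ctrbMat A B 0).rank ≤ 0 := by
        simpa [hr] using Matrix.rank_le_card_width (ctrbMat A B 0)
      exact absurd (by omega : (ctrbMat A B 0).rank = n) (hmin 0 (by omega))
    · intro hEq
      have h1 := Matrix.rank_le_card_width (ctrbMat Y B k)
      simp only [Fintype.card_prod, Fintype.card_fin] at h1
      have h2 : k * r < m * r := (Nat.mul_lt_mul_right hr).mpr hkm
      omega
  -- reindexed square controllability matrix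
  have hrank : ∀ Y : Matrix (Fin n) (Fin n) ℝ,
      (Matrix.reindex (Equiv.refl (Fin n)) e (ctrbMat Y B m)).rank = (ctrbMat Y B m).rank :=
    fun Y => rank_reindex_cols (ctrbMat Y B m) e
  -- the determinant polynomial
  set q : ℝ[X] :=
    (Matrix.reindex (Equiv.refl (Fin n)) e
      (Matrix.of (fun (i : Fin n) (c : Fin m × Fin r) =>
        ((A.map C + (X : ℝ[X]) • M.map C) ^ (c.1 : ℕ) * B.map C) i c.2))).det with hqdef
  have heval : ∀ h : ℝ, q.eval h
      = (Matrix.reindex (Equiv.refl (Fin n)) e (ctrbMat (A + h • M) B m)).det := by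
    intro h
    rw [hqdef, ← coe_evalRingHom, RingHom.map_det]
    congr 1
    ext i k
    have := congrFun (congrFun (map_eval_ctrbPoly (m := m) A M B h) i) (e.symm k)
    simpa [Matrix.reindex_apply, Matrix.submatrix_apply, Matrix.map_apply, ctrbMat] using this
  -- q is not the zero polynomial
  have hq0 : q ≠ 0 := by
    intro hq
    have h0 := heval 0
    rw [hq, Polynomial.eval_zero] at h0
    have : A + (0 : ℝ) • M = A := by simp
    rw [this] at h0
    exact det_ne_zero_of_rank_eq _ (by rw [hrank A]; exact hc) h0.symm
  -- covering set
  apply Set.Finite.subset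
    (Set.Finite.union (Set.finite_singleton (0 : ℝ))
      ((Polynomial.finite_setOf_isRoot hq0).image (fun x => x⁻¹)))
  intro g hg
  by_contra hgc
  simp only [Set.mem_union, Set.mem_singleton_iff, Set.mem_image, not_or, not_exists,
    not_and] at hgc
  obtain ⟨hg0, hgim⟩ := hgc
  apply hg
  refine ⟨?_, hk (M + g • A)⟩
  -- g⁻¹ is not a root of q
  have hroot : ¬ q.IsRoot g⁻¹ := by
    intro hr
    exact hgim g⁻¹ hr (by rw [inv_inv])
  have hdet : (Matrix.reindex (Equiv.refl (Fin n)) e (ctrbMat (A + g⁻¹ • M) B m)).det ≠ 0 := by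
    rw [← heval g⁻¹]; exact hroot
  -- column scaling relation
  have hscale : Matrix.reindex (Equiv.refl (Fin n)) e (ctrbMat (M + g • A) B m)
      = Matrix.of (fun i k => (g ^ ((e.symm k).1 : ℕ)) *
          (Matrix.reindex (Equiv.refl (Fin n)) e (ctrbMat (A + g⁻¹ • M) B m)) i k) := by
    ext i k
    simp only [Matrix.reindex_apply, Matrix.submatrix_apply, Matrix.of_apply, ctrbMat]
    have hMg : M + g • A = g • (A + g⁻¹ • M) := by
      rw [smul_add, smul_smul, mul_inv_cancel₀ hg0, one_smul, add_comm]
    rw [hMg, _root_.smul_pow, Matrix.smul_mul, Matrix.smul_apply, smul_eq_mul]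
  have hdet2 : (Matrix.reindex (Equiv.refl (Fin n)) e (ctrbMat (M + g • A) B m)).det ≠ 0 := by
    have hcol := Matrix.det_mul_row (fun k : Fin n => g ^ (((e.symm k).1 : Fin m) : ℕ))
      (Matrix.reindex (Equiv.refl (Fin n)) e (ctrbMat (A + g⁻¹ • M) B m))
    rw [hscale, hcol]
    exact mul_ne_zero (Finset.prod_ne_zero_iff.mpr fun k _ => pow_ne_zero _ hg0) hdet
  rw [← hrank (M + g • A)]
  exact rank_eq_of_det_ne_zero _ hdet2
end

section
/- Let G be a strongly connected directed graph on vertex set {1,...,m} (each vertex having a self-loop) and fix q ∈ {1,...,m}. Then there exists a real m×m matrix G = [g_ij] with all row sums equal to zero, and with g_ij = 0 whenever there is no arc from j to i in the graph, such that the pair (G, e_q) is controllable, where e_q is the q-th standard basis vector of ℝ^m. -/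
/-!
Pick a breadth-first spanning tree rooted at `q`, giving each vertex `v ≠ q` a parent
`par v` with an arc `par v → v`, and let row `v` of `G` be `a v • (e_{par v} - e_v)` with
distinct weights `a` vanishing only at `q`. For each vertex `j`, a left eigenvector of `G`
for the eigenvalue `-a j` is obtained by back-substitution along the path from `j` to the
root, and it does not vanish at `q`. Pairing these eigenvectors with the Krylov vectors
`G ^ k e_q` gives a diagonal matrix times the Vandermonde matrix of the distinct eigenvalues,
so the controllability matrix is invertible.
-/

open Matrix

/-- The controllability matrix `[b, Gb, ..., G^(m-1) b]` of a pair `(G, b)` with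
`b` a vector. -/
noncomputable def ctrbVec {m : ℕ} (G : Matrix (Fin m) (Fin m) ℝ) (b : Fin m → ℝ) :
    Matrix (Fin m) (Fin m) ℝ :=
  fun i k => (G ^ (k : ℕ) *ᵥ b) i

section Reachability

variable {α : Type*} (r : α → α → Prop) (a : α)

def ReachableIn : ℕ → α → Prop
  | 0, b => b = a
  | n + 1, b => ∃ c, ReachableIn n c ∧ r c b

variable {r a}

theorem exists_reachableIn_of_reflTransGen {b : α} (h : Relation.ReflTransGen r a b) :
    ∃ n, ReachableIn r a n b := by
  induction h with
  | refl => exact ⟨0, rfl⟩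
  | tail _ hcb ih =>
    obtain ⟨n, hn⟩ := ih
    exact ⟨n + 1, _, hn, hcb⟩

theorem exists_parent_of_forall_reflTransGen (h : ∀ b, Relation.ReflTransGen r a b) :
    ∃ (par : α → α) (d : α → ℕ), ∀ b, b ≠ a → r (par b) b ∧ d (par b) < d b := by
  classical
  let d b := Nat.find (exists_reachableIn_of_reflTransGen (h b))
  have hpar : ∀ b, b ≠ a → ∃ c, r c b ∧ d c < d b := by
    intro b hb
    have hspec := Nat.find_spec (exists_reachableIn_of_reflTransGen (h b))
    change ReachableIn r a (d b) b at hspec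
    cases hdb : d b with
    | zero => rw [hdb] at hspec; exact absurd hspec hb
    | succ k =>
      rw [hdb] at hspec
      obtain ⟨c, hc, hcb⟩ := hspec
      exact ⟨c, hcb, (Nat.find_min' _ hc).trans_lt k.lt_succ_self⟩
  choose! par hpar using hpar
  exact ⟨par, d, hpar⟩

end Reachability

theorem vecMul_pow_of_vecMul_eq_smul {n R : Type*} [Fintype n] [DecidableEq n] [CommSemiring R]
    {A : Matrix n n R} {w : n → R} {μ : R} (hw : w ᵥ* A = μ • w) (k : ℕ) :
    w ᵥ* A ^ k = μ ^ k • w := by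
  induction k with
  | zero => simp
  | succ k ih => rw [pow_succ, ← vecMul_vecMul, ih, smul_vecMul, hw, smul_smul, pow_succ]

/-- `w j ⬝ᵥ (A ^ k *ᵥ b) = (w j ⬝ᵥ b) * μ j ^ k` factors the controllability matrix
through the invertible Vandermonde matrix of the `μ j`. -/
theorem rank_ctrbVec_of_leftEigenvectors {m : ℕ} (A : Matrix (Fin m) (Fin m) ℝ) (b : Fin m → ℝ)
    (w : Fin m → Fin m → ℝ) (μ : Fin m → ℝ) (hμ : Function.Injective μ)
    (hw : ∀ j, w j ᵥ* A = μ j • w j) (hb : ∀ j, w j ⬝ᵥ b ≠ 0) :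
    (ctrbVec A b).rank = m := by
  have hfactor : of w * ctrbVec A b = diagonal (fun j => w j ⬝ᵥ b) * vandermonde μ := by
    ext j k
    rw [diagonal_mul, vandermonde_apply]
    change w j ⬝ᵥ (A ^ (k : ℕ) *ᵥ b) = _
    rw [dotProduct_mulVec, vecMul_pow_of_vecMul_eq_smul (hw j), smul_dotProduct, smul_eq_mul,
      mul_comm]
  have hdet : (of w).det * (ctrbVec A b).det ≠ 0 := by
    rw [← det_mul, hfactor, det_mul, det_diagonal]
    exact mul_ne_zero (Finset.prod_ne_zero_iff.mpr fun j _ => hb j)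
      (det_vandermonde_ne_zero_iff.mpr hμ)
  simpa using rank_of_det_ne_zero (right_ne_zero_of_mul hdet)

section TreeMatrix

variable {K V : Type*} [Field K] [DecidableEq V] (par : V → V) (a : V → K) (d : V → ℕ)

def treeMatrix : Matrix V V K :=
  of fun v => a v • (Pi.single (par v) 1 - Pi.single v 1)

theorem treeMatrix_eq_zero {v w : V} (hpar : par v ≠ w) (hv : v ≠ w) :
    treeMatrix par a v w = 0 := by
  simp [treeMatrix, hpar.symm, hv.symm]

theorem treeMatrix_row_sum [Fintype V] (v : V) : ∑ w, treeMatrix par a v w = 0 := by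
  simp [treeMatrix, ← Finset.mul_sum, Finset.sum_sub_distrib]

/-- The coefficient is chosen so that row `j` and the defect of `pathVec μ (par j)` cancel at
`par j`; `d` only makes the recursion terminate. -/
noncomputable def pathVec (μ : K) (j : V) : V → K :=
  if d (par j) < d j then Pi.single j 1 + (a j / (μ + a (par j))) • pathVec μ (par j)
  else Pi.single j 1
termination_by d j

variable {par a d} {r : V}

theorem pathVec_apply_root_ne_zero (hd : ∀ v, v ≠ r → d (par v) < d v) (har : a r = 0)
    (ha : Function.Injective a) (μ : K) (j : V)
    (hμ : ∀ i, d i < d j → μ + a i ≠ 0) : pathVec par a d μ j r ≠ 0 := by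
  rw [pathVec]
  split_ifs with hj
  · by_cases hjr : j = r
    · simp [hjr, har]
    · have ih := pathVec_apply_root_ne_zero hd har ha μ (par j) fun i hi => hμ i (hi.trans hj)
      have haj : a j ≠ 0 := fun h => hjr (ha (h.trans har.symm))
      simpa [Ne.symm hjr] using ⟨⟨haj, hμ _ hj⟩, ih⟩
  · obtain rfl : j = r := by by_contra h; exact hj (hd j h)
    simp
termination_by d j

variable [Fintype V]

theorem pathVec_vecMul (hd : ∀ v, v ≠ r → d (par v) < d v) (har : a r = 0) (μ : K) (j : V)
    (hμ : ∀ i, d i < d j → μ + a i ≠ 0) :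
    pathVec par a d μ j ᵥ* treeMatrix par a
      = μ • pathVec par a d μ j - (μ + a j) • Pi.single j 1 := by
  rw [pathVec]
  split_ifs with hj
  · have ih := pathVec_vecMul hd har μ (par j) fun i hi => hμ i (hi.trans hj)
    have hp : μ + a (par j) ≠ 0 := hμ _ hj
    rw [add_vecMul, smul_vecMul, ih, single_one_vecMul]
    ext i
    simp only [treeMatrix, row, of_apply, Pi.add_apply, Pi.sub_apply, Pi.smul_apply, smul_eq_mul]
    field_simp
    ring
  · obtain rfl : j = r := by by_contra h; exact hj (hd j h)
    ext i
    simp [treeMatrix, har]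
termination_by d j

theorem pathVec_isLeftEigenvector (hd : ∀ v, v ≠ r → d (par v) < d v) (har : a r = 0)
    (ha : Function.Injective a) (j : V) :
    pathVec par a d (-a j) j ᵥ* treeMatrix par a = (-a j) • pathVec par a d (-a j) j ∧
      pathVec par a d (-a j) j r ≠ 0 := by
  have hμ : ∀ i, d i < d j → -a j + a i ≠ 0 := fun i hi h =>
    hi.ne (congrArg d (ha (neg_add_eq_zero.mp h)).symm)
  refine ⟨?_, pathVec_apply_root_ne_zero hd har ha _ j hμ⟩
  rw [pathVec_vecMul hd har _ j hμ, neg_add_cancel, zero_smul, sub_zero]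

end TreeMatrix

/-- For a strongly connected directed graph on `{1,...,m}` (with self-loops) and
any fixed vertex `q`, there is a real `m × m` matrix `G` with zero row sums,
respecting the graph's sparsity pattern (`G i j = 0` when there is no arc from
`j` to `i`), such that `(G, e_q)` is a controllable pair. -/
theorem stmt2 {m : ℕ} (arc : Fin m → Fin m → Prop)
    (hself : ∀ i, arc i i)
    (hsc : ∀ i j, Relation.ReflTransGen arc i j)
    (q : Fin m) :
    ∃ G : Matrix (Fin m) (Fin m) ℝ,
      (∀ i, ∑ j, G i j = 0) ∧
      (∀ i j, ¬ arc j i → G i j = 0) ∧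
      (ctrbVec G (fun i => if i = q then 1 else 0)).rank = m := by
  obtain ⟨par, d, hpar⟩ := exists_parent_of_forall_reflTransGen (hsc q)
  let a : Fin m → ℝ := fun v => (v : ℝ) - q
  have ha : Function.Injective a := fun v w h => Fin.ext (by simpa [a] using h)
  have haq : a q = 0 := sub_self _
  have hd : ∀ v, v ≠ q → d (par v) < d v := fun v hv => (hpar v hv).2
  refine ⟨treeMatrix par a, treeMatrix_row_sum par a, fun i j hij => ?_, ?_⟩
  · by_cases hiq : i = q
    · simp [treeMatrix, hiq, haq]
    · exact treeMatrix_eq_zero par a (fun h => hij (h ▸ (hpar i hiq).1))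
        (fun h => hij (h ▸ hself i))
  · have heig := pathVec_isLeftEigenvector hd haq ha
    refine rank_ctrbVec_of_leftEigenvectors _ _ _ (fun j => -a j) (neg_injective.comp ha)
      (fun j => (heig j).1) fun j => ?_
    simpa [dotProduct] using (heig j).2
end

section
/- Let {A, B_i, C_i; m} be an n-dimensional jointly controllable and jointly observable continuous-time m-channel linear system with strongly connected neighbor graph N (with self-loops). Define the extended system with n_i-dimensional integrators ż_i = v_i at each channel, with coefficient matrices Ā = diag(A, 0), B̄_i = diag(B_i, E_i), C̄_i = diag(C_i, E_{N_i}'). If n_i ≥ n − min over subsets s ⊂ {1,...,m} and λ ∈ σ(A) of rank [λI_n − A, B_s; C_{m−s}, 0] for all i, then the extended system has no fixed spectrum; that is, for every λ ∈ ℂ and every subset s ⊆ {1,...,m}, rank [λI − Ā, B̄_s; C̄_{m−s}, 0] ≥ n̄ where n̄ = n + Σ_i n_i. -/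
open Matrix Complex

noncomputable section

variable {n m : ℕ}

/-- Fixed-mode pencil `[λI − A, B_s; C_{m−s}, 0]` of the original system, in a
rank-equivalent form: the columns of `B_i` for `i ∉ s` and the rows of `C_i`
for `i ∈ s` are set to zero (zero columns/rows do not affect the rank). -/
def pencil (p q : Fin m → ℕ)
    (A : Matrix (Fin n) (Fin n) ℝ)
    (B : ∀ i, Matrix (Fin n) (Fin (p i)) ℝ)
    (C : ∀ i, Matrix (Fin (q i)) (Fin n) ℝ)
    (lam : ℂ) (s : Finset (Fin m)) :
    Matrix (Fin n ⊕ Σ i, Fin (q i)) (Fin n ⊕ Σ i, Fin (p i)) ℂ :=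
  fromBlocks (lam • 1 - A.map ofReal)
    (fun r c => if c.1 ∈ s then ofReal ((B c.1) r c.2) else 0)
    (fun r c => if r.1 ∈ s then 0 else ofReal ((C r.1) r.2 c))
    0

/-- The block column `E_i` selecting the `i`-th integrator block. -/
def Eblk (nd : Fin m → ℕ) (i : Fin m) :
    Matrix (Σ j, Fin (nd j)) (Fin (nd i)) ℂ :=
  fun r c => if h : r.1 = i then (if h ▸ r.2 = c then 1 else 0) else 0

/-- The selector `E_t` (as a square matrix with identity blocks on positions in
`t` and zeros elsewhere; its rank is `Σ_{i ∈ t} n_i`). -/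
def Esel (nd : Fin m → ℕ) (t : Finset (Fin m)) :
    Matrix (Σ j, Fin (nd j)) (Σ j, Fin (nd j)) ℂ :=
  fun r c => if r = c ∧ r.1 ∈ t then 1 else 0

/-- `Ā = diag(A, 0)` of the extended system. -/
def Abar (nd : Fin m → ℕ) (A : Matrix (Fin n) (Fin n) ℝ) :
    Matrix (Fin n ⊕ Σ j, Fin (nd j)) (Fin n ⊕ Σ j, Fin (nd j)) ℂ :=
  fromBlocks (A.map ofReal) 0 0 0

/-- `B̄_i = diag(B_i, E_i)`. -/
def Bbar (p nd : Fin m → ℕ) (B : ∀ i, Matrix (Fin n) (Fin (p i)) ℝ) (i : Fin m) :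
    Matrix (Fin n ⊕ Σ j, Fin (nd j)) (Fin (p i) ⊕ Fin (nd i)) ℂ :=
  fromBlocks ((B i).map ofReal) 0 0 (Eblk nd i)

/-- `C̄_i = diag(C_i, E_{N_i}')`. -/
def Cbar (q nd : Fin m → ℕ) (C : ∀ i, Matrix (Fin (q i)) (Fin n) ℝ)
    (N : Fin m → Finset (Fin m)) (i : Fin m) :
    Matrix (Fin (q i) ⊕ Σ j, Fin (nd j)) (Fin n ⊕ Σ j, Fin (nd j)) ℂ :=
  fromBlocks ((C i).map ofReal) 0 0 (Esel nd (N i))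

/-- Fixed-mode pencil of the extended system (same zeroing convention for the
channel subset `s`). -/
def extPencil (p q nd : Fin m → ℕ)
    (A : Matrix (Fin n) (Fin n) ℝ)
    (B : ∀ i, Matrix (Fin n) (Fin (p i)) ℝ)
    (C : ∀ i, Matrix (Fin (q i)) (Fin n) ℝ)
    (N : Fin m → Finset (Fin m))
    (lam : ℂ) (s : Finset (Fin m)) :
    Matrix ((Fin n ⊕ Σ j, Fin (nd j)) ⊕ Σ i, (Fin (q i) ⊕ Σ j, Fin (nd j)))
      ((Fin n ⊕ Σ j, Fin (nd j)) ⊕ Σ i, (Fin (p i) ⊕ Fin (nd i))) ℂ :=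
  fromBlocks (lam • 1 - Abar nd A)
    (fun r c => if c.1 ∈ s then Bbar p nd B c.1 r c.2 else 0)
    (fun r c => if r.1 ∈ s then 0 else Cbar q nd C N r.1 r.2 c)
    0

end

/-!
Choosing rows and columns suitably, the extended pencil contains the block-diagonal minor
`diag(P, T)`, where `P` is the pencil of the original system and `T = [I, Y; 0, I]` is
invertible of size `Σ nᵢ + d`. Integrator coordinates of a channel in `s` are matched with the
columns of `E_i`, those of a channel outside `s` with the rows of its own `E_{Nᵢ}'` (this is where
the self-loops enter); the `d` extra rows are rows of `E_{N_b}'` for a channel `b ∉ s` observing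
the integrator of a channel `a ∈ s`, matched with the integrator state columns of `a`.
If `s = ∅`, `s = univ` or `λ ∉ σ(A)`, then `P` already has rank `n` and `d = 0` suffices;
otherwise strong connectivity provides such a pair `a ∈ N_b`, and `d = n_a ≥ n - rank P`
makes up for the rank deficiency of `P`.
-/

open Module

theorem Submodule.finrank_prod {R M M₂ : Type*} [Ring R] [StrongRankCondition R]
    [AddCommGroup M] [Module R M] [AddCommGroup M₂] [Module R M₂]
    (p : Submodule R M) (q : Submodule R M₂) [Module.Finite R p] [Module.Finite R q]
    [Module.Free R p] [Module.Free R q] :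
    finrank R (p.prod q) = finrank R p + finrank R q := by
  have hinj : Function.Injective (p.subtype.prodMap q.subtype) :=
    Prod.map_injective.mpr ⟨p.injective_subtype, q.injective_subtype⟩
  rw [← Module.finrank_prod, ← LinearMap.finrank_range_of_inj hinj, LinearMap.range_prodMap,
    Submodule.range_subtype, Submodule.range_subtype]

theorem Matrix.rank_fromBlocks_zero_zero {R l m n o : Type*} [Field R] [Fintype l] [Fintype m]
    [Fintype n] [Fintype o] (X : Matrix l m R) (S : Matrix n o R) :
    (fromBlocks X 0 0 S).rank = X.rank + S.rank := by
  let e := LinearEquiv.sumArrowLequivProdArrow m o R R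
  let e' := LinearEquiv.sumArrowLequivProdArrow l n R R
  have h : (fromBlocks X 0 0 S).mulVecLin
      = e'.symm.toLinearMap ∘ₗ X.mulVecLin.prodMap S.mulVecLin ∘ₗ e.toLinearMap := by
    refine LinearMap.ext fun v => funext fun i => ?_
    rw [← Sum.elim_comp_inl_inr v]
    rcases i with i | i <;> simp [e, e', fromBlocks_mulVec] <;> rfl
  rw [rank, h, LinearMap.range_comp, LinearMap.range_comp_of_range_eq_top _ e.range,
    LinearEquiv.finrank_map_eq, LinearMap.range_prodMap, Submodule.finrank_prod]
  rfl

theorem Relation.ReflTransGen.exists_mem_notMem {α : Type*} {r : α → α → Prop} {S : Set α}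
    {a b : α} (h : Relation.ReflTransGen r a b) (ha : a ∈ S) (hb : b ∉ S) :
    ∃ x y, x ∈ S ∧ y ∉ S ∧ r x y := by
  induction h with
  | refl => exact absurd ha hb
  | @tail y z _ hyz ih =>
    by_cases hy : y ∈ S
    · exact ⟨y, z, hy, hb, hyz⟩
    · exact ih hy

section IntegratorMinor

variable {n m : ℕ} {κ : Type*} [DecidableEq κ] (p q nd : Fin m → ℕ)
  (A : Matrix (Fin n) (Fin n) ℝ) (B : ∀ i, Matrix (Fin n) (Fin (p i)) ℝ)
  (C : ∀ i, Matrix (Fin (q i)) (Fin n) ℝ) (N : Fin m → Finset (Fin m))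
  (lam : ℂ) (s : Finset (Fin m)) (i₀ : κ → Fin m) (w : κ → Σ j, Fin (nd j))

lemma Eblk_apply (i : Fin m) (z : Σ j, Fin (nd j)) (c : Fin (nd i)) :
    Eblk nd i z c = if z = ⟨i, c⟩ then 1 else 0 := by
  obtain ⟨j, k⟩ := z
  by_cases h : j = i
  · subst h
    simp [Eblk]
  · simp [Eblk, h]

lemma extPencil_eq_fromBlocks :
    extPencil p q nd A B C N lam s = fromBlocks (lam • 1 - Abar nd A)
      (of fun r c => if c.1 ∈ s then Bbar p nd B c.1 r c.2 else 0)
      (of fun r c => if r.1 ∈ s then 0 else Cbar q nd C N r.1 r.2 c) 0 := rfl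

lemma pencil_eq_fromBlocks :
    pencil p q A B C lam s = fromBlocks (lam • 1 - A.map ofReal)
      (of fun r c => if c.1 ∈ s then ofReal ((B c.1) r c.2) else 0)
      (of fun r c => if r.1 ∈ s then 0 else ofReal ((C r.1) r.2 c)) 0 := rfl

def extRowSel :
    (Fin n ⊕ Σ i, Fin (q i)) ⊕ ((Σ j, Fin (nd j)) ⊕ κ) →
      (Fin n ⊕ Σ j, Fin (nd j)) ⊕ Σ i, (Fin (q i) ⊕ Σ j, Fin (nd j))
  | .inl (.inl x) => .inl (.inl x)
  | .inl (.inr r) => .inr ⟨r.1, .inl r.2⟩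
  | .inr (.inl z) => if z.1 ∈ s then .inl (.inr z) else .inr ⟨z.1, .inr z⟩
  | .inr (.inr k) => .inr ⟨i₀ k, .inr (w k)⟩

def extColSel :
    (Fin n ⊕ Σ i, Fin (p i)) ⊕ ((Σ j, Fin (nd j)) ⊕ κ) →
      (Fin n ⊕ Σ j, Fin (nd j)) ⊕ Σ i, (Fin (p i) ⊕ Fin (nd i))
  | .inl (.inl x) => .inl (.inl x)
  | .inl (.inr c) => .inr ⟨c.1, .inl c.2⟩
  | .inr (.inl z) => if z.1 ∈ s then .inr ⟨z.1, .inr z.2⟩ else .inl (.inr z)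
  | .inr (.inr k) => .inl (.inr (w k))

def integratorBlock : Matrix ((Σ j, Fin (nd j)) ⊕ κ) ((Σ j, Fin (nd j)) ⊕ κ) ℂ :=
  fromBlocks 1 (of fun z k => if z = w k then lam else 0) 0 1

theorem extPencil_submatrix_extRowSel_extColSel (hself : ∀ i, i ∈ N i)
    (hw : Function.Injective w) (hws : ∀ k, (w k).1 ∈ s) (hi₀ : ∀ k, i₀ k ∉ s)
    (hwN : ∀ k, (w k).1 ∈ N (i₀ k)) :
    (extPencil p q nd A B C N lam s).submatrix (extRowSel q nd s i₀ w) (extColSel p nd s w) =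
      fromBlocks (pencil p q A B C lam s) 0 0 (integratorBlock nd lam w) := by
  ext r c
  rcases r with (x | ⟨i, r⟩) | (z | k) <;> rcases c with (y | ⟨i', c⟩) | (z' | k')
  all_goals
    simp only [submatrix_apply, extRowSel, extColSel]
    try split_ifs
  all_goals
    simp [extPencil_eq_fromBlocks, pencil_eq_fromBlocks, integratorBlock, Abar, Bbar, Cbar,
      Esel, Eblk_apply, one_apply, hself, hi₀, hwN, hw.eq_iff]
  -- integrator coordinates of channels in `s` and outside `s` are distinct
  all_goals grind

theorem rank_pencil_add_le_rank_extPencil [Fintype κ] (hself : ∀ i, i ∈ N i)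
    (hw : Function.Injective w) (hws : ∀ k, (w k).1 ∈ s) (hi₀ : ∀ k, i₀ k ∉ s)
    (hwN : ∀ k, (w k).1 ∈ N (i₀ k)) :
    (pencil p q A B C lam s).rank + (∑ i, nd i + Fintype.card κ) ≤
      (extPencil p q nd A B C N lam s).rank := by
  have hunit : IsUnit (integratorBlock nd lam w) := by
    rw [integratorBlock, isUnit_fromBlocks_zero₂₁]
    exact ⟨isUnit_one, isUnit_one⟩
  calc (pencil p q A B C lam s).rank + (∑ i, nd i + Fintype.card κ)
      = (fromBlocks (pencil p q A B C lam s) 0 0 (integratorBlock nd lam w)).rank := by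
        simp only [rank_fromBlocks_zero_zero, rank_of_isUnit _ hunit, Fintype.card_sum,
          Fintype.card_sigma, Fintype.card_fin]
    _ ≤ (extPencil p q nd A B C N lam s).rank := by
        rw [← extPencil_submatrix_extRowSel_extColSel p q nd A B C N lam s i₀ w hself hw hws
          hi₀ hwN]
        exact rank_submatrix_le _ _ _

theorem le_rank_pencil_of_notMem_spectrum (h : lam ∉ spectrum ℂ (A.map ofReal)) :
    n ≤ (pencil p q A B C lam s).rank := by
  rw [spectrum.notMem_iff, Algebra.algebraMap_eq_smul_one] at h
  calc n = (lam • 1 - A.map ofReal).rank := by rw [rank_of_isUnit _ h, Fintype.card_fin]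
    _ ≤ (pencil p q A B C lam s).rank :=
      rank_submatrix_le (pencil p q A B C lam s) Sum.inl Sum.inl

end IntegratorMinor

/-- For a jointly controllable and jointly observable `m`-channel linear system
with strongly connected neighbor graph, if each local integrator dimension
`n_i` satisfies the lower bound `n_i ≥ n − min rank` of the fixed-mode pencil,
then the extended system has no fixed spectrum: the extended pencil has rank at
least `n̄ = n + Σ_i n_i` for every `λ ∈ ℂ` and every channel subset `s`. -/
theorem stmt9 {n m : ℕ} (p q nd : Fin m → ℕ)
    (A : Matrix (Fin n) (Fin n) ℝ)
    (B : ∀ i, Matrix (Fin n) (Fin (p i)) ℝ)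
    (C : ∀ i, Matrix (Fin (q i)) (Fin n) ℝ)
    (N : Fin m → Finset (Fin m))
    (hself : ∀ i, i ∈ N i)
    (hsc : ∀ i j, Relation.ReflTransGen (fun a b => a ∈ N b) i j)
    -- joint controllability: rank [λI − A, B] = n for all λ
    (hctrb : ∀ lam : ℂ, (pencil p q A B C lam Finset.univ).rank = n)
    -- joint observability: rank [λI − A; C] = n for all λ
    (hobs : ∀ lam : ℂ, (pencil p q A B C lam ∅).rank = n)
    -- n_i ≥ n − min_{s, λ ∈ σ(A)} rank [λI − A, B_s; C_{m−s}, 0]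
    (hbound : ∀ i, ∀ (s : Finset (Fin m)) (lam : ℂ),
      lam ∈ spectrum ℂ (A.map Complex.ofReal) →
      n - (pencil p q A B C lam s).rank ≤ nd i) :
    ∀ (lam : ℂ) (s : Finset (Fin m)),
      n + ∑ i, nd i ≤ (extPencil p q nd A B C N lam s).rank := by
  intro lam s
  have hbase := rank_pencil_add_le_rank_extPencil p q nd A B C N lam s (κ := Empty) Empty.elim
    Empty.elim hself (fun k => k.elim) (fun k => k.elim) (fun k => k.elim) (fun k => k.elim)
  rw [Fintype.card_empty, add_zero] at hbase
  obtain rfl | ⟨j, hj⟩ := s.eq_empty_or_nonempty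
  · linarith [hobs lam]
  by_cases hfull : ∀ i, i ∈ s
  · rw [Finset.eq_univ_of_forall hfull] at hbase ⊢
    linarith [hctrb lam]
  obtain ⟨i, hi⟩ := not_forall.mp hfull
  by_cases hlam : lam ∈ spectrum ℂ (A.map ofReal)
  · obtain ⟨a, b, ha, hb, hab⟩ := (hsc j i).exists_mem_notMem hj hi
    have hext := rank_pencil_add_le_rank_extPencil p q nd A B C N lam s (fun _ => b)
      (Sigma.mk a) hself sigma_mk_injective (fun _ => ha) (fun _ => hb) (fun _ => hab)
    rw [Fintype.card_fin] at hext
    have := hbound a s lam hlam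
    omega
  · linarith [le_rank_pencil_of_notMem_spectrum p q A B C lam s hlam]
end

section
/- For the extended system with n_i > 0 for all i, the transfer graph of the extended system (arc from j to i iff C̄_i(sI − Ā)^{-1} B̄_j ≠ 0) is strongly connected if and only if the union of the transfer graph of the original system (arc from j to i iff C_i(sI − A)^{-1}B_j ≠ 0) and the neighbor graph N is strongly connected. Key step: for i ≠ j, C̄_i(sI − Ā)^{-1}B̄_j ≠ 0 iff C_i(sI − A)^{-1}B_j ≠ 0 or E_{N_i}' E_j ≠ 0, and E_{N_i}' E_j ≠ 0 iff j ∈ N_i. -/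
open Matrix Complex

/-- Arc of the transfer graph of the original system: from `j` to `i` iff the
transfer matrix `C_i (sI − A)⁻¹ B_j` is not identically zero. -/
def origArc {n m : ℕ} (p q : Fin m → ℕ)
    (A : Matrix (Fin n) (Fin n) ℝ)
    (B : ∀ i, Matrix (Fin n) (Fin (p i)) ℝ)
    (C : ∀ i, Matrix (Fin (q i)) (Fin n) ℝ)
    (j i : Fin m) : Prop :=
  ∃ s : ℂ, IsUnit (s • (1 : Matrix (Fin n) (Fin n) ℂ) - A.map Complex.ofReal).det ∧
    (C i).map Complex.ofReal *
      (s • (1 : Matrix (Fin n) (Fin n) ℂ) - A.map Complex.ofReal)⁻¹ *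
      (B j).map Complex.ofReal ≠ 0

/-- Arc of the transfer graph of the extended system. -/
def extArc {n m : ℕ} (p q nd : Fin m → ℕ)
    (A : Matrix (Fin n) (Fin n) ℝ)
    (B : ∀ i, Matrix (Fin n) (Fin (p i)) ℝ)
    (C : ∀ i, Matrix (Fin (q i)) (Fin n) ℝ)
    (N : Fin m → Finset (Fin m))
    (j i : Fin m) : Prop :=
  ∃ s : ℂ, IsUnit (s • 1 - Abar nd A).det ∧
    Cbar q nd C N i * (s • 1 - Abar nd A)⁻¹ * Bbar p nd B j ≠ 0

section Aux

open Matrix Polynomial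

variable {n m : ℕ}

private lemma rtg_mono' {α : Type*} {r r' : α → α → Prop}
    (h : ∀ x y, x ≠ y → r x y → r' x y) {a b : α}
    (hab : Relation.ReflTransGen r a b) : Relation.ReflTransGen r' a b := by
  induction hab with
  | refl => exact .refl
  | @tail x c _ hbc ih =>
    by_cases hxc : x = c
    · exact hxc ▸ ih
    · exact ih.tail (h _ _ hxc hbc)

private lemma sub_Abar_eq (nd : Fin m → ℕ) (A : Matrix (Fin n) (Fin n) ℝ) (s : ℂ) :
    s • (1 : Matrix (Fin n ⊕ Σ j, Fin (nd j)) (Fin n ⊕ Σ j, Fin (nd j)) ℂ) - Abar nd A =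
      fromBlocks (s • 1 - A.map Complex.ofReal) 0 0 (s • 1) := by
  rw [Abar, show (s • (1 : Matrix (Fin n ⊕ Σ j, Fin (nd j)) (Fin n ⊕ Σ j, Fin (nd j)) ℂ)) =
      fromBlocks (s • 1) 0 0 (s • 1) by rw [← Matrix.fromBlocks_one, Matrix.fromBlocks_smul]; simp,
    sub_eq_add_neg, Matrix.fromBlocks_neg, Matrix.fromBlocks_add]
  simp [sub_eq_add_neg]

private lemma fromBlocks_zero_iff' {l m' n' o : Type*} (a : Matrix l n' ℂ) (d : Matrix m' o ℂ) :
    fromBlocks a 0 0 d = 0 ↔ a = 0 ∧ d = 0 := by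
  constructor
  · intro h
    constructor <;> ext i j
    · simpa using congrFun (congrFun h (Sum.inl i)) (Sum.inl j)
    · simpa using congrFun (congrFun h (Sum.inr i)) (Sum.inr j)
  · rintro ⟨rfl, rfl⟩
    ext (i | i) (j | j) <;> simp

private lemma esel_mul_eblk (nd : Fin m → ℕ) (t : Finset (Fin m)) (j : Fin m) :
    Esel nd t * Eblk nd j = if j ∈ t then Eblk nd j else 0 := by
  ext r c
  rw [Matrix.mul_apply, Finset.sum_eq_single r
    (fun x _ hx => by simp [Esel, Ne.symm hx]) (fun h => absurd (Finset.mem_univ r) h)]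
  obtain ⟨r1, r2⟩ := r
  by_cases hrj : r1 = j
  · subst hrj
    by_cases hjt : r1 ∈ t <;> simp [Esel, Eblk, hjt]
  · by_cases hjt : j ∈ t <;> simp [Esel, Eblk, hrj, hjt]

private lemma eblk_ne_zero (nd : Fin m → ℕ) (j : Fin m) (h : 0 < nd j) :
    Eblk nd j ≠ 0 := by
  intro H
  have := congrFun (congrFun H ⟨j, ⟨0, h⟩⟩) ⟨0, h⟩
  simp [Eblk] at this

private lemma inv_blocks' (nd : Fin m → ℕ) (M : Matrix (Fin n) (Fin n) ℂ)
    (h : IsUnit M.det) {s : ℂ} (hs : s ≠ 0) :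
    (fromBlocks M 0 0 (s • (1 : Matrix (Σ j, Fin (nd j)) (Σ j, Fin (nd j)) ℂ)))⁻¹ =
      fromBlocks M⁻¹ 0 0 (s⁻¹ • 1) := by
  apply Matrix.inv_eq_right_inv
  rw [Matrix.fromBlocks_multiply]
  rw [Matrix.mul_nonsing_inv _ h]
  simp [Matrix.smul_mul, smul_smul, inv_mul_cancel₀ hs, Matrix.fromBlocks_one]

private lemma det_blocks' (nd : Fin m → ℕ) (A : Matrix (Fin n) (Fin n) ℝ) (s : ℂ) :
    (s • 1 - Abar nd A).det =
      (s • 1 - A.map Complex.ofReal).det * s ^ Fintype.card (Σ j, Fin (nd j)) := by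
  rw [sub_Abar_eq, Matrix.det_fromBlocks_zero₁₂, Matrix.det_smul, Matrix.det_one, mul_one]

private lemma prod_blocks' (p q nd : Fin m → ℕ)
    (A : Matrix (Fin n) (Fin n) ℝ)
    (B : ∀ i, Matrix (Fin n) (Fin (p i)) ℝ)
    (C : ∀ i, Matrix (Fin (q i)) (Fin n) ℝ)
    (N : Fin m → Finset (Fin m)) (i j : Fin m) {s : ℂ}
    (h : IsUnit (s • (1 : Matrix (Fin n) (Fin n) ℂ) - A.map Complex.ofReal).det)
    (hs : s ≠ 0) :
    Cbar q nd C N i * (s • 1 - Abar nd A)⁻¹ * Bbar p nd B j =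
      fromBlocks
        ((C i).map Complex.ofReal *
          (s • 1 - A.map Complex.ofReal)⁻¹ * (B j).map Complex.ofReal) 0 0
        (s⁻¹ • if j ∈ N i then Eblk nd j else 0) := by
  rw [sub_Abar_eq, inv_blocks' nd _ h hs, Cbar, Bbar,
    Matrix.fromBlocks_multiply, Matrix.fromBlocks_multiply]
  simp [Matrix.mul_smul, Matrix.smul_mul, esel_mul_eblk]


private lemma charmatrix_eval (Ac : Matrix (Fin n) (Fin n) ℂ) (s : ℂ) :
    (Matrix.charmatrix Ac).map (Polynomial.evalRingHom s) = s • 1 - Ac := by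
  ext i j
  by_cases h : i = j
  · subst h
    simp [Matrix.charmatrix_apply_eq, Matrix.one_apply]
  · simp [Matrix.charmatrix_apply_ne _ _ _ h, Matrix.one_apply, h]

private lemma det_eval (Ac : Matrix (Fin n) (Fin n) ℂ) (s : ℂ) :
    (s • 1 - Ac).det = Polynomial.eval s Ac.charpoly := by
  rw [← charmatrix_eval Ac s]
  have := (Polynomial.evalRingHom s).map_det (Matrix.charmatrix Ac)
  simpa [RingHom.mapMatrix_apply, Matrix.charpoly] using this.symm

private lemma adj_prod_iff {k l : ℕ} (Ac : Matrix (Fin n) (Fin n) ℂ)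
    (Cc : Matrix (Fin k) (Fin n) ℂ) (Bc : Matrix (Fin n) (Fin l) ℂ) {s : ℂ}
    (h : IsUnit (s • 1 - Ac).det) :
    Cc * (s • 1 - Ac)⁻¹ * Bc ≠ 0 ↔ Cc * (s • 1 - Ac).adjugate * Bc ≠ 0 := by
  rw [Matrix.inv_def, Matrix.mul_smul, Matrix.smul_mul]
  rw [Ring.inverse_eq_inv']
  have hd : (s • 1 - Ac).det ≠ 0 := h.ne_zero
  rw [smul_ne_zero_iff]
  simp [inv_ne_zero hd]

private lemma orig_good {k l : ℕ} {Ac : Matrix (Fin n) (Fin n) ℂ}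
    {Cc : Matrix (Fin k) (Fin n) ℂ} {Bc : Matrix (Fin n) (Fin l) ℂ}
    {s₀ : ℂ} (hdet : IsUnit (s₀ • 1 - Ac).det)
    (hne : Cc * (s₀ • 1 - Ac)⁻¹ * Bc ≠ 0) :
    ∃ s : ℂ, s ≠ 0 ∧ IsUnit (s • 1 - Ac).det ∧ Cc * (s • 1 - Ac)⁻¹ * Bc ≠ 0 := by
  classical
  set Qp : Matrix (Fin k) (Fin l) (Polynomial ℂ) :=
    Cc.map Polynomial.C * (Matrix.charmatrix Ac).adjugate * Bc.map Polynomial.C with hQp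
  have hmapC : ∀ (a b : ℕ) (M : Matrix (Fin a) (Fin b) ℂ) (s : ℂ),
      (M.map Polynomial.C).map (Polynomial.evalRingHom s) = M := by
    intro a b M s
    rw [Matrix.map_map]
    convert Matrix.map_id M
    funext x
    simp
  have hQmap : ∀ s : ℂ, Qp.map (Polynomial.evalRingHom s) =
      Cc * (s • 1 - Ac).adjugate * Bc := by
    intro s
    rw [hQp, Matrix.map_mul, Matrix.map_mul, hmapC, hmapC, ← charmatrix_eval Ac s]
    congr 1
    congr 1
    have := (Polynomial.evalRingHom s).map_adjugate (Matrix.charmatrix Ac)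
    simpa [RingHom.mapMatrix_apply] using this
  have h0 : Cc * (s₀ • 1 - Ac).adjugate * Bc ≠ 0 := (adj_prod_iff Ac Cc Bc hdet).mp hne
  rw [← hQmap s₀] at h0
  obtain ⟨a, b, hab⟩ : ∃ a b, Qp a b ≠ 0 := by
    by_contra hc
    push_neg at hc
    apply h0
    ext a b
    simp [hc a b]
  have hχ : Ac.charpoly ≠ 0 := (Matrix.charpoly_monic Ac).ne_zero
  have hr : (Polynomial.X * Ac.charpoly * Qp a b : Polynomial ℂ) ≠ 0 :=
    mul_ne_zero (mul_ne_zero Polynomial.X_ne_zero hχ) hab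
  obtain ⟨s, hs⟩ : ∃ s : ℂ, ¬ (Polynomial.X * Ac.charpoly * Qp a b).IsRoot s := by
    have := (Polynomial.finite_setOf_isRoot hr).infinite_compl
    obtain ⟨s, hs⟩ := this.nonempty
    exact ⟨s, hs⟩
  simp only [Polynomial.IsRoot, Polynomial.eval_mul, Polynomial.eval_X, mul_ne_zero_iff] at hs
  obtain ⟨⟨hs0, hsχ⟩, hsq⟩ := hs
  have hdet' : IsUnit (s • 1 - Ac).det := by
    rw [det_eval, isUnit_iff_ne_zero]; exact hsχ
  refine ⟨s, hs0, hdet', ?_⟩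
  rw [adj_prod_iff Ac Cc Bc hdet', ← hQmap s]
  intro Hc
  apply hsq
  have := congrFun (congrFun Hc a) b
  simpa using this

private lemma exists_ne_zero_unit (Ac : Matrix (Fin n) (Fin n) ℂ) :
    ∃ s : ℂ, s ≠ 0 ∧ IsUnit (s • 1 - Ac).det := by
  have hχ : Ac.charpoly ≠ 0 := (Matrix.charpoly_monic Ac).ne_zero
  have hr : (Polynomial.X * Ac.charpoly : Polynomial ℂ) ≠ 0 :=
    mul_ne_zero Polynomial.X_ne_zero hχ
  obtain ⟨s, hs⟩ := ((Polynomial.finite_setOf_isRoot hr).infinite_compl).nonempty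
  simp only [Set.mem_compl_iff, Set.mem_setOf_eq, Polynomial.IsRoot, Polynomial.eval_mul,
    Polynomial.eval_X, mul_ne_zero_iff] at hs
  exact ⟨s, hs.1, by rw [det_eval, isUnit_iff_ne_zero]; exact hs.2⟩


end Aux

/-- With `n_i > 0` for all `i`: (key step) for `i ≠ j` the extended transfer
graph has an arc from `j` to `i` iff the original transfer graph does or
`j ∈ N_i`; and the extended transfer graph is strongly connected iff the union
of the original transfer graph and the neighbor graph is strongly connected. -/
theorem stmt12 {n m : ℕ} (p q nd : Fin m → ℕ)
    (A : Matrix (Fin n) (Fin n) ℝ)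
    (B : ∀ i, Matrix (Fin n) (Fin (p i)) ℝ)
    (C : ∀ i, Matrix (Fin (q i)) (Fin n) ℝ)
    (N : Fin m → Finset (Fin m))
    (hnd : ∀ i, 0 < nd i) :
    (∀ i j : Fin m, i ≠ j →
      (extArc p q nd A B C N j i ↔ origArc p q A B C j i ∨ j ∈ N i)) ∧
    ((∀ a b : Fin m, Relation.ReflTransGen (extArc p q nd A B C N) a b) ↔
      ∀ a b : Fin m,
        Relation.ReflTransGen (fun x y => origArc p q A B C x y ∨ x ∈ N y) a b) := by
    classical
  have key : ∀ i j : Fin m,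
      extArc p q nd A B C N j i ↔ origArc p q A B C j i ∨ j ∈ N i := by
    intro i j
    have hnem : Nonempty (Σ j, Fin (nd j)) := ⟨⟨i, ⟨0, hnd i⟩⟩⟩
    have hcard : 0 < Fintype.card (Σ j, Fin (nd j)) := Fintype.card_pos
    constructor
    · rintro ⟨s, hdet, hprod⟩
      rw [det_blocks', isUnit_iff_ne_zero, mul_ne_zero_iff,
        pow_ne_zero_iff hcard.ne'] at hdet
      obtain ⟨hd, hs⟩ := hdet
      have hd' : IsUnit (s • 1 - A.map Complex.ofReal).det := isUnit_iff_ne_zero.mpr hd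
      rw [prod_blocks' p q nd A B C N i j hd' hs] at hprod
      by_contra hc
      push_neg at hc
      obtain ⟨ho, hN⟩ := hc
      apply hprod
      rw [show ((C i).map Complex.ofReal * (s • 1 - A.map Complex.ofReal)⁻¹ *
          (B j).map Complex.ofReal) = 0 from by
        by_contra hx; exact ho ⟨s, hd', hx⟩]
      simp [hN]
    · rintro (⟨s₀, hdet₀, hne₀⟩ | hjN)
      · obtain ⟨s, hs0, hdet, hne⟩ := orig_good hdet₀ hne₀
        refine ⟨s, ?_, ?_⟩
        · rw [det_blocks', isUnit_iff_ne_zero]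
          exact mul_ne_zero hdet.ne_zero (pow_ne_zero _ hs0)
        · rw [prod_blocks' p q nd A B C N i j hdet hs0]
          intro Hc
          rw [fromBlocks_zero_iff'] at Hc
          exact hne Hc.1
      · obtain ⟨s, hs0, hdet⟩ := exists_ne_zero_unit (A.map Complex.ofReal)
        refine ⟨s, ?_, ?_⟩
        · rw [det_blocks', isUnit_iff_ne_zero]
          exact mul_ne_zero hdet.ne_zero (pow_ne_zero _ hs0)
        · rw [prod_blocks' p q nd A B C N i j hdet hs0]
          intro Hc
          rw [fromBlocks_zero_iff'] at Hc
          have h2 := Hc.2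
          rw [if_pos hjN, smul_eq_zero] at h2
          rcases h2 with h2 | h2
          · exact inv_ne_zero hs0 h2
          · exact eblk_ne_zero nd j (hnd j) h2
  refine ⟨fun i j _ => key i j, ?_⟩
  constructor
  · intro h a b
    exact rtg_mono' (fun x y _ => (key y x).mp) (h a b)
  · intro h a b
    exact rtg_mono' (fun x y _ => (key y x).mpr) (h a b)
end

section
/- Let {A, B_i, C_i; m} be jointly controllable and jointly observable with a weakly connected neighbor graph and bounded transmission delays, and suppose state holding is used and the dimension bound n_i ≥ n − min_{s,λ∈σ(A)} rank [λI−A, B_s; C_{m−s}, 0] holds for all i. Then the state-held lifted extended system {Â, B̂_i, Ĉ_i; m} has NO fixed eigenvalues at all (including at 0) if and only if N_{m−s} ∩ s ≠ ∅ for every subset s satisfying rank [λI−A, B_s; C_{m−s}, 0] < n for some λ ∈ σ(A). -/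
open Matrix Complex

noncomputable section

variable {n m : ℕ}

/-- Index type of the lifted shift registers: agent `j` stores
`z_j(t), z_j(t−1), ..., z_j(t−D j)`. -/
abbrev LiftZ (nd D : Fin m → ℕ) := Σ j : Fin m, Fin (D j + 1) × Fin (nd j)

/-- The lifted `Ã`: block diagonal with `A` and the shift registers. -/
def Alift (nd D : Fin m → ℕ) (A : Matrix (Fin n) (Fin n) ℝ) :
    Matrix (Fin n ⊕ LiftZ nd D) (Fin n ⊕ LiftZ nd D) ℂ :=
  fromBlocks (A.map ofReal) 0 0
    (fun r c =>
      if h : r.1 = c.1 then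
        (if (r.2.1 : ℕ) = (c.2.1 : ℕ) + 1 ∧ h ▸ r.2.2 = c.2.2 then 1 else 0)
      else 0)

/-- The lifted `B̃_i`: injects `u_i` into the plant and `v_i` into the head of
agent `i`'s shift register. -/
def Blift (p nd D : Fin m → ℕ) (B : ∀ i, Matrix (Fin n) (Fin (p i)) ℝ) (i : Fin m) :
    Matrix (Fin n ⊕ LiftZ nd D) (Fin (p i) ⊕ Fin (nd i)) ℂ :=
  fromBlocks ((B i).map ofReal) 0 0
    (fun r c =>
      if h : r.1 = i then
        (if (r.2.1 : ℕ) = 0 ∧ h ▸ r.2.2 = c then 1 else 0)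
      else 0)

/-- The lifted `C̃_i`: outputs `y_i = C_i x` together with, for each neighbor
`j ∈ N i`, the delayed state `z_j(t − del j i)` (register `del j i` in agent
`j`'s shift chain). -/
def Clift (q nd D : Fin m → ℕ) (C : ∀ i, Matrix (Fin (q i)) (Fin n) ℝ)
    (N : Fin m → Finset (Fin m)) (del : Fin m → Fin m → ℕ) (i : Fin m) :
    Matrix (Fin (q i) ⊕ Σ j, Fin (nd j)) (Fin n ⊕ LiftZ nd D) ℂ :=
  fromBlocks ((C i).map ofReal) 0 0
    (fun r c =>
      if h : c.1 = r.1 then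
        (if r.1 ∈ N i ∧ (c.2.1 : ℕ) = del r.1 i ∧ r.2 = h ▸ c.2.2 then 1 else 0)
      else 0)

/-- Fixed-mode pencil of the lifted extended system. -/
def liftPencil (p q nd D : Fin m → ℕ)
    (A : Matrix (Fin n) (Fin n) ℝ)
    (B : ∀ i, Matrix (Fin n) (Fin (p i)) ℝ)
    (C : ∀ i, Matrix (Fin (q i)) (Fin n) ℝ)
    (N : Fin m → Finset (Fin m)) (del : Fin m → Fin m → ℕ)
    (lam : ℂ) (s : Finset (Fin m)) :
    Matrix ((Fin n ⊕ LiftZ nd D) ⊕ Σ i, (Fin (q i) ⊕ Σ j, Fin (nd j)))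
      ((Fin n ⊕ LiftZ nd D) ⊕ Σ i, (Fin (p i) ⊕ Fin (nd i))) ℂ :=
  fromBlocks (lam • 1 - Alift nd D A)
    (fun r c => if c.1 ∈ s then Blift p nd D B c.1 r c.2 else 0)
    (fun r c => if r.1 ∈ s then 0 else Clift q nd D C N del r.1 r.2 c)
    0

end

section AuxStmt18
open Matrix Complex

variable {n m : ℕ} {p q nd : Fin m → ℕ}
  {A : Matrix (Fin n) (Fin n) ℝ}
  {B : ∀ i, Matrix (Fin n) (Fin (p i)) ℝ}
  {C : ∀ i, Matrix (Fin (q i)) (Fin n) ℝ}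
  {N : Fin m → Finset (Fin m)} {D : Fin m → ℕ}
  {lam : ℂ} {s : Finset (Fin m)}

/-- embedding of pencil columns into lifted pencil columns -/
def embC : (Fin n ⊕ Σ i, Fin (p i)) → ((Fin n ⊕ LiftZ nd D) ⊕ Σ i, (Fin (p i) ⊕ Fin (nd i))) :=
  Sum.elim (fun a => Sum.inl (Sum.inl a)) (fun bi => Sum.inr ⟨bi.1, Sum.inl bi.2⟩)

lemma sum_split (f : ((Fin n ⊕ LiftZ nd D) ⊕ Σ i, (Fin (p i) ⊕ Fin (nd i))) → ℂ) :
    ∑ x, f x = (∑ a, f (Sum.inl (Sum.inl a))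
      + ∑ j, ∑ k, ∑ α, f (Sum.inl (Sum.inr ⟨j, (k, α)⟩)))
      + ∑ i, (∑ b, f (Sum.inr ⟨i, Sum.inl b⟩) + ∑ c, f (Sum.inr ⟨i, Sum.inr c⟩)) := by
  rw [Fintype.sum_sum_type, Fintype.sum_sum_type]
  congr 1
  · congr 1
    rw [← Finset.univ_sigma_univ, Finset.sum_sigma]
    exact Finset.sum_congr rfl fun j _ => by rw [Fintype.sum_prod_type]
  · rw [← Finset.univ_sigma_univ, Finset.sum_sigma]
    exact Finset.sum_congr rfl fun i _ => by rw [Fintype.sum_sum_type]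

lemma mulVec_row_x (w : ((Fin n ⊕ LiftZ nd D) ⊕ Σ i, (Fin (p i) ⊕ Fin (nd i))) → ℂ) (a : Fin n) :
    (liftPencil p q nd D A B C N (fun j _ => D j) lam s).mulVec w (Sum.inl (Sum.inl a))
      = (pencil p q A B C lam s).mulVec (w ∘ embC) (Sum.inl a) := by
  rw [mulVec, mulVec, dotProduct, dotProduct, sum_split, Fintype.sum_sum_type,
    ← Finset.univ_sigma_univ, Finset.sum_sigma]
  simp [liftPencil, pencil, Alift, Blift, fromBlocks, Matrix.one_apply, embC, ite_and,
    Matrix.sub_apply, Matrix.smul_apply]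
end AuxStmt18

section AuxStmt18b
open Matrix Complex
variable {n m : ℕ} {p q nd : Fin m → ℕ}
  {A : Matrix (Fin n) (Fin n) ℝ}
  {B : ∀ i, Matrix (Fin n) (Fin (p i)) ℝ}
  {C : ∀ i, Matrix (Fin (q i)) (Fin n) ℝ}
  {N : Fin m → Finset (Fin m)} {D : Fin m → ℕ}
  {lam : ℂ} {s : Finset (Fin m)}

lemma sum_diag_LZ {m : ℕ} {nd D : Fin m → ℕ} (z : LiftZ nd D) (g : LiftZ nd D → ℂ) :
    ∑ x : Fin m, ∑ x1 : Fin (D x + 1), ∑ x2 : Fin (nd x),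
      (if z = ⟨x, (x1, x2)⟩ then g ⟨x, (x1, x2)⟩ else 0) = g z := by
  have h : ∀ x : Fin m, (∑ x1 : Fin (D x + 1), ∑ x2 : Fin (nd x),
      (if z = ⟨x, (x1, x2)⟩ then g ⟨x, (x1, x2)⟩ else 0))
      = ∑ y : Fin (D x + 1) × Fin (nd x), (if z = ⟨x, y⟩ then g ⟨x, y⟩ else 0) := fun x => by
    rw [Fintype.sum_prod_type]
  have h2 : (∑ z' : LiftZ nd D, if z = z' then g z' else 0)
      = ∑ x : Fin m, ∑ y : Fin (D x + 1) × Fin (nd x), (if z = ⟨x, y⟩ then g ⟨x, y⟩ else 0) := by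
    rw [← Finset.univ_sigma_univ, Finset.sum_sigma]
  rw [Finset.sum_congr rfl fun x _ => h x, ← h2]
  simp

lemma mulVec_row_y (w : ((Fin n ⊕ LiftZ nd D) ⊕ Σ i, (Fin (p i) ⊕ Fin (nd i))) → ℂ)
    (i : Fin m) (y : Fin (q i)) :
    (liftPencil p q nd D A B C N (fun j _ => D j) lam s).mulVec w (Sum.inr ⟨i, Sum.inl y⟩)
      = (pencil p q A B C lam s).mulVec (w ∘ embC) (Sum.inr ⟨i, y⟩) := by
  rw [mulVec, mulVec, dotProduct, dotProduct, sum_split, Fintype.sum_sum_type,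
    ← Finset.univ_sigma_univ, Finset.sum_sigma]
  simp [liftPencil, pencil, Clift, fromBlocks, embC]

set_option maxHeartbeats 1000000 in
lemma mulVec_row_z (w : ((Fin n ⊕ LiftZ nd D) ⊕ Σ i, (Fin (p i) ⊕ Fin (nd i))) → ℂ)
    (j : Fin m) (k : Fin (D j + 1)) (α : Fin (nd j)) :
    (liftPencil p q nd D A B C N (fun j _ => D j) lam s).mulVec w (Sum.inl (Sum.inr ⟨j, (k, α)⟩))
      = lam * w (Sum.inl (Sum.inr ⟨j, (k, α)⟩))
        - (∑ k' : Fin (D j + 1), if (k : ℕ) = (k' : ℕ) + 1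
            then w (Sum.inl (Sum.inr ⟨j, (k', α)⟩)) else 0)
        + (if j ∈ s ∧ (k : ℕ) = 0 then w (Sum.inr ⟨j, Sum.inr α⟩) else 0) := by
  rw [mulVec, dotProduct, sum_split]
  simp [liftPencil, Alift, Blift, fromBlocks, Matrix.one_apply, sub_mul, ite_and,
    Finset.sum_sub_distrib, Finset.mul_sum]
  simp only [Sum.inr.injEq]
  exact sum_diag_LZ ⟨j, (k, α)⟩ fun z' => lam * w (Sum.inl (Sum.inr z'))
end AuxStmt18b

section AuxStmt18c
open Matrix Complex
variable {n m : ℕ} {p q nd : Fin m → ℕ}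
  {A : Matrix (Fin n) (Fin n) ℝ}
  {B : ∀ i, Matrix (Fin n) (Fin (p i)) ℝ}
  {C : ∀ i, Matrix (Fin (q i)) (Fin n) ℝ}
  {N : Fin m → Finset (Fin m)} {D : Fin m → ℕ}
  {lam : ℂ} {s : Finset (Fin m)}

lemma sum_pred_zero {T : ℕ} (k : Fin (T + 1)) (hk : (k : ℕ) = 0) (f : Fin (T + 1) → ℂ) :
    (∑ k' : Fin (T + 1), if (k : ℕ) = (k' : ℕ) + 1 then f k' else 0) = 0 :=
  Finset.sum_eq_zero fun k' _ => if_neg (by omega)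

lemma sum_pred_succ {T : ℕ} (k k0 : Fin (T + 1)) (hk : (k : ℕ) = (k0 : ℕ) + 1)
    (f : Fin (T + 1) → ℂ) :
    (∑ k' : Fin (T + 1), if (k : ℕ) = (k' : ℕ) + 1 then f k' else 0) = f k0 := by
  rw [Finset.sum_eq_single k0 (fun b _ hb => if_neg fun hc => hb (by apply Fin.ext; omega))
    (fun h => absurd (Finset.mem_univ k0) h), if_pos hk]

lemma sum_reg {m : ℕ} {nd D : Fin m → ℕ} (j : Fin m) (α : Fin (nd j)) (g : LiftZ nd D → ℂ) :
    (∑ x : Fin m, ∑ x1 : Fin (D x + 1), ∑ x2 : Fin (nd x),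
      (if h : x = j then (if (x1 : ℕ) = D j ∧ α = h ▸ x2 then (1 : ℂ) else 0) else 0)
        * g ⟨x, (x1, x2)⟩)
      = g ⟨j, (Fin.last (D j), α)⟩ := by
  have hlast : ∀ x1 : Fin (D j + 1), ((x1 : ℕ) = D j) ↔ x1 = Fin.last (D j) := fun x1 => by
    rw [Fin.ext_iff]; simp
  rw [Finset.sum_eq_single j (fun b _ hb => by simp [hb])
    (fun h => absurd (Finset.mem_univ j) h)]
  simp [ite_and, hlast, Finset.sum_ite_eq, Finset.sum_ite_eq']

set_option maxHeartbeats 1000000 in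
lemma mulVec_row_reg (w : ((Fin n ⊕ LiftZ nd D) ⊕ Σ i, (Fin (p i) ⊕ Fin (nd i))) → ℂ)
    (i j : Fin m) (α : Fin (nd j)) :
    (liftPencil p q nd D A B C N (fun j _ => D j) lam s).mulVec w (Sum.inr ⟨i, Sum.inr ⟨j, α⟩⟩)
      = if i ∉ s ∧ j ∈ N i
          then w (Sum.inl (Sum.inr ⟨j, (Fin.last (D j), α)⟩)) else 0 := by
  rw [mulVec, dotProduct, sum_split]
  by_cases hi : i ∈ s
  · simp [liftPencil, fromBlocks, hi]
  · have hlast : ∀ x1 : Fin (D j + 1), ((x1 : ℕ) = D j) ↔ x1 = Fin.last (D j) := fun x1 => by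
      rw [Fin.ext_iff]; simp
    by_cases hij : j ∈ N i
    · simp only [liftPencil, Clift, fromBlocks, Matrix.of_apply, Sum.elim_inl, Sum.elim_inr,
        Matrix.zero_apply, if_neg hi, hi, hij, true_and, not_false_iff, and_true]
      simp only [if_true, if_false, zero_mul, Finset.sum_const_zero, add_zero, zero_add,
        mul_zero]
      exact sum_reg j α fun z' => w (Sum.inl (Sum.inr z'))
    · simp [liftPencil, Clift, fromBlocks, hi, hij]
end AuxStmt18c

section AuxStmt18d
open Matrix Complex

variable {n m : ℕ} {p q nd : Fin m → ℕ}
  {A : Matrix (Fin n) (Fin n) ℝ}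
  {B : ∀ i, Matrix (Fin n) (Fin (p i)) ℝ}
  {C : ∀ i, Matrix (Fin (q i)) (Fin n) ℝ}
  {N : Fin m → Finset (Fin m)} {D : Fin m → ℕ}
  {lam : ℂ} {s : Finset (Fin m)}

/-- parametrization of the kernel of the lifted pencil -/
def psiFun (nd : Fin m → ℕ) (N : Fin m → Finset (Fin m)) (D : Fin m → ℕ) (lam : ℂ)
    (s : Finset (Fin m))
    (v : (Fin n ⊕ Σ i, Fin (p i)) → ℂ)
    (ζ : (Σ j : {j : Fin m // j ∉ (sᶜ).biUnion N}, Fin (nd j.1)) → ℂ)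
    (ρ : (Σ i : {i : Fin m // i ∉ s}, Fin (nd i.1)) → ℂ) :
    ((Fin n ⊕ LiftZ nd D) ⊕ Σ i, (Fin (p i) ⊕ Fin (nd i))) → ℂ
  | Sum.inl (Sum.inl a) => v (Sum.inl a)
  | Sum.inl (Sum.inr ⟨j, (k, α)⟩) =>
      if h : j ∈ (sᶜ).biUnion N then 0 else lam ^ (D j - (k : ℕ)) * ζ ⟨⟨j, h⟩, α⟩
  | Sum.inr ⟨i, Sum.inl b⟩ => v (Sum.inr ⟨i, b⟩)
  | Sum.inr ⟨i, Sum.inr c⟩ =>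
      if h : i ∈ s then
        (if h2 : i ∈ (sᶜ).biUnion N then 0 else -(lam ^ (D i + 1)) * ζ ⟨⟨i, h2⟩, c⟩)
      else ρ ⟨⟨i, h⟩, c⟩

lemma psiFun_comp_embC (v ζ ρ) :
    (psiFun (n := n) (p := p) nd N D lam s v ζ ρ) ∘ embC = v := by
  funext c; rcases c with a | ⟨i, b⟩ <;> rfl

lemma psiFun_mem_ker (hself : ∀ i, i ∈ N i) (v ζ ρ)
    (hv : (pencil p q A B C lam s).mulVec v = 0) :
    (liftPencil p q nd D A B C N (fun j _ => D j) lam s).mulVec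
      (psiFun nd N D lam s v ζ ρ) = 0 := by
  funext r
  simp only [Pi.zero_apply]
  rcases r with (a | ⟨j, k, α⟩) | ⟨i, y | ⟨j, α⟩⟩
  · rw [mulVec_row_x, psiFun_comp_embC, hv]; rfl
  · rw [mulVec_row_z]
    by_cases hj : j ∈ (sᶜ).biUnion N
    · by_cases hjs : j ∈ s <;> simp [psiFun, hj, hjs]
    · have hjs : j ∈ s := by
        by_contra hc
        exact hj (Finset.mem_biUnion.2 ⟨j, Finset.mem_compl.2 hc, hself j⟩)
      by_cases hk : (k : ℕ) = 0
      · rw [sum_pred_zero k hk, if_pos ⟨hjs, hk⟩]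
        simp only [psiFun, dif_neg hj, dif_pos hjs, hk, Nat.sub_zero]
        rw [pow_succ]; ring
      · have hklt := k.isLt
        have hk0lt : (k : ℕ) - 1 < D j + 1 := by omega
        rw [sum_pred_succ k ⟨(k : ℕ) - 1, hk0lt⟩ (by simp; omega), if_neg (by tauto)]
        simp only [psiFun, dif_neg hj]
        have h2 : D j - ((⟨(k : ℕ) - 1, hk0lt⟩ : Fin (D j + 1)) : ℕ)
            = (D j - (k : ℕ)) + 1 := by simp; omega
        rw [h2, pow_succ]; ring
  · rw [mulVec_row_y, psiFun_comp_embC, hv]; rfl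
  · rw [mulVec_row_reg]
    split_ifs with h
    · have hj : j ∈ (sᶜ).biUnion N :=
        Finset.mem_biUnion.2 ⟨i, Finset.mem_compl.2 h.1, h.2⟩
      simp [psiFun, hj]
    · rfl

lemma ker_chain (w : ((Fin n ⊕ LiftZ nd D) ⊕ Σ i, (Fin (p i) ⊕ Fin (nd i))) → ℂ)
    (hw : ∀ r, (liftPencil p q nd D A B C N (fun j _ => D j) lam s).mulVec w r = 0)
    (j : Fin m) (α : Fin (nd j)) :
    ∀ (t : ℕ) (k : Fin (D j + 1)), (k : ℕ) + t = D j →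
      w (Sum.inl (Sum.inr ⟨j, (k, α)⟩))
        = lam ^ t * w (Sum.inl (Sum.inr ⟨j, (Fin.last (D j), α)⟩)) := by
  intro t
  induction t with
  | zero =>
    intro k hk
    have : k = Fin.last (D j) := Fin.ext (by simp only [Fin.val_last]; omega)
    rw [this, pow_zero, one_mul]
  | succ t ih =>
    intro k hk
    have hklt : (k : ℕ) + 1 < D j + 1 := by omega
    have h0 := hw (Sum.inl (Sum.inr ⟨j, (⟨(k : ℕ) + 1, hklt⟩, α)⟩))
    rw [mulVec_row_z, sum_pred_succ ⟨(k : ℕ) + 1, hklt⟩ k rfl,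
      if_neg (by rintro ⟨-, hc⟩; simp at hc)] at h0
    have h1 : w (Sum.inl (Sum.inr ⟨j, (k, α)⟩))
        = lam * w (Sum.inl (Sum.inr ⟨j, (⟨(k : ℕ) + 1, hklt⟩, α)⟩)) := by
      have := sub_eq_zero.2 (h0.symm ▸ rfl : (0:ℂ) = 0)
      linear_combination -h0
    rw [h1, ih ⟨(k : ℕ) + 1, hklt⟩ (by simp; omega), pow_succ]; ring

lemma ker_last_zero (w : ((Fin n ⊕ LiftZ nd D) ⊕ Σ i, (Fin (p i) ⊕ Fin (nd i))) → ℂ)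
    (hw : ∀ r, (liftPencil p q nd D A B C N (fun j _ => D j) lam s).mulVec w r = 0)
    (j : Fin m) (hj : j ∈ (sᶜ).biUnion N) (α : Fin (nd j)) :
    w (Sum.inl (Sum.inr ⟨j, (Fin.last (D j), α)⟩)) = 0 := by
  obtain ⟨i, hi, hij⟩ := Finset.mem_biUnion.1 hj
  have h0 := hw (Sum.inr ⟨i, Sum.inr ⟨j, α⟩⟩)
  rwa [mulVec_row_reg, if_pos ⟨Finset.mem_compl.1 hi, hij⟩] at h0

lemma psiFun_of_ker (hself : ∀ i, i ∈ N i)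
    (w : ((Fin n ⊕ LiftZ nd D) ⊕ Σ i, (Fin (p i) ⊕ Fin (nd i))) → ℂ)
    (hw : ∀ r, (liftPencil p q nd D A B C N (fun j _ => D j) lam s).mulVec w r = 0) :
    psiFun nd N D lam s (w ∘ embC)
      (fun z => w (Sum.inl (Sum.inr ⟨z.1.1, (Fin.last (D z.1.1), z.2)⟩)))
      (fun z => w (Sum.inr ⟨z.1.1, Sum.inr z.2⟩)) = w := by
  funext col
  rcases col with (a | ⟨j, k, α⟩) | ⟨i, b | c⟩
  · rfl
  · simp only [psiFun]
    by_cases hj : j ∈ (sᶜ).biUnion N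
    · rw [dif_pos hj, ker_chain w hw j α (D j - (k : ℕ)) k (by omega),
        ker_last_zero w hw j hj α, mul_zero]
    · rw [dif_neg hj, ker_chain w hw j α (D j - (k : ℕ)) k (by omega)]
  · rfl
  · simp only [psiFun]
    by_cases his : i ∈ s
    · rw [dif_pos his]
      have h0 := hw (Sum.inl (Sum.inr ⟨i, (⟨0, Nat.succ_pos _⟩, c)⟩))
      rw [mulVec_row_z, sum_pred_zero _ rfl, if_pos ⟨his, rfl⟩] at h0
      have hch := ker_chain w hw i c (D i) ⟨0, Nat.succ_pos _⟩ (by simp)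
      by_cases hN : i ∈ (sᶜ).biUnion N
      · rw [dif_pos hN]
        rw [hch, ker_last_zero w hw i hN c, mul_zero, mul_zero, sub_zero, zero_add] at h0
        exact h0.symm
      · rw [dif_neg hN]
        rw [hch] at h0
        rw [pow_succ]
        linear_combination -h0
    · rw [dif_neg his]

end AuxStmt18d

section AuxStmt18e
open Matrix Complex FiniteDimensional

variable {n m : ℕ} {p q nd : Fin m → ℕ}
  {A : Matrix (Fin n) (Fin n) ℝ}
  {B : ∀ i, Matrix (Fin n) (Fin (p i)) ℝ}
  {C : ∀ i, Matrix (Fin (q i)) (Fin n) ℝ}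
  {N : Fin m → Finset (Fin m)} {D : Fin m → ℕ}
  {lam : ℂ} {s : Finset (Fin m)}

set_option maxHeartbeats 1000000 in
lemma rank_liftPencil_eq (hself : ∀ i, i ∈ N i) :
    (liftPencil p q nd D A B C N (fun j _ => D j) lam s).rank
      = (pencil p q A B C lam s).rank + (∑ i, (D i + 1) * nd i)
        + ∑ j ∈ ((sᶜ).biUnion N) ∩ s, nd j := by
  classical
  set M := liftPencil p q nd D A B C N (fun j _ => D j) lam s with hMdef
  set P := pencil p q A B C lam s with hPdef
  -- the kernel equivalence
  have memP : ∀ w : ((Fin n ⊕ LiftZ nd D) ⊕ Σ i, (Fin (p i) ⊕ Fin (nd i))) → ℂ,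
      M.mulVecLin w = 0 → P.mulVecLin (w ∘ embC) = 0 := by
    intro w hw
    have hwr : ∀ r, M.mulVec w r = 0 := fun r => by
      rw [show M.mulVec w = 0 from hw]; rfl
    funext r
    simp only [mulVecLin_apply, Pi.zero_apply]
    rcases r with a | ⟨i, y⟩
    · rw [← mulVec_row_x]; exact hwr _
    · rw [← mulVec_row_y]; exact hwr _
  let e : (LinearMap.ker M.mulVecLin) ≃ₗ[ℂ]
      (LinearMap.ker P.mulVecLin
        × ((Σ j : {j : Fin m // j ∉ (sᶜ).biUnion N}, Fin (nd j.1)) → ℂ)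
        × ((Σ i : {i : Fin m // i ∉ s}, Fin (nd i.1)) → ℂ)) :=
    { toFun := fun w =>
        (⟨w.1 ∘ embC, LinearMap.mem_ker.2 (memP _ (LinearMap.mem_ker.1 w.2))⟩,
          fun z => w.1 (Sum.inl (Sum.inr ⟨z.1.1, (Fin.last (D z.1.1), z.2)⟩)),
          fun z => w.1 (Sum.inr ⟨z.1.1, Sum.inr z.2⟩)),
      invFun := fun t =>
        ⟨psiFun nd N D lam s t.1.1 t.2.1 t.2.2, LinearMap.mem_ker.2 (by
          rw [mulVecLin_apply]
          exact psiFun_mem_ker hself t.1.1 t.2.1 t.2.2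
            (by rw [← mulVecLin_apply]; exact LinearMap.mem_ker.1 t.1.2))⟩,
      left_inv := fun w => by
        apply Subtype.ext
        apply psiFun_of_ker hself
        intro r
        have := LinearMap.mem_ker.1 w.2
        rw [show M.mulVec (w : _) = 0 by rw [← mulVecLin_apply]; exact this]; rfl
      right_inv := fun t => by
        refine Prod.ext (Subtype.ext (psiFun_comp_embC t.1.1 t.2.1 t.2.2)) (Prod.ext ?_ ?_)
        · funext z
          dsimp only
          simp only [psiFun, dif_neg z.1.2, Fin.val_last, Nat.sub_self, pow_zero, one_mul]
        · funext z
          dsimp only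
          simp only [psiFun, dif_neg z.1.2]
      map_add' := fun w w' => rfl,
      map_smul' := fun c w => rfl }
  have hdim := e.finrank_eq
  rw [Module.finrank_prod, Module.finrank_prod, Module.finrank_fintype_fun_eq_card,
    Module.finrank_fintype_fun_eq_card, Fintype.card_sigma, Fintype.card_sigma] at hdim
  simp only [Fintype.card_fin] at hdim
  have hZ1 : (∑ j : {j : Fin m // j ∉ (sᶜ).biUnion N}, nd j.1)
      = ∑ j ∈ ((sᶜ).biUnion N)ᶜ, nd j :=
    (Finset.sum_subtype (((sᶜ).biUnion N)ᶜ) (fun x => Finset.mem_compl) nd).symm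
  have hZ2 : (∑ i : {i : Fin m // i ∉ s}, nd i.1)
      = ∑ i ∈ sᶜ, nd i :=
    (Finset.sum_subtype (sᶜ) (fun x => Finset.mem_compl) nd).symm
  rw [hZ1, hZ2] at hdim
  have eM := LinearMap.finrank_range_add_finrank_ker M.mulVecLin
  have eP := LinearMap.finrank_range_add_finrank_ker P.mulVecLin
  rw [Module.finrank_fintype_fun_eq_card] at eM eP
  have hrM : M.rank = Module.finrank ℂ (LinearMap.range M.mulVecLin) := rfl
  have hrP : P.rank = Module.finrank ℂ (LinearMap.range P.mulVecLin) := rfl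
  have cM : Fintype.card ((Fin n ⊕ LiftZ nd D) ⊕ Σ i, (Fin (p i) ⊕ Fin (nd i)))
      = n + (∑ i, (D i + 1) * nd i) + ((∑ i, p i) + ∑ i, nd i) := by
    simp [Fintype.card_sigma, Finset.sum_add_distrib]
  have cP : Fintype.card (Fin n ⊕ Σ i, Fin (p i)) = n + ∑ i, p i := by
    simp
  have hs' : ∀ j, j ∉ s → j ∈ (sᶜ).biUnion N := fun j hj =>
    Finset.mem_biUnion.2 ⟨j, Finset.mem_compl.2 hj, hself j⟩
  have hU : (((sᶜ).biUnion N) ∩ s) ∪ sᶜ = (sᶜ).biUnion N := by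
    ext j
    simp only [Finset.mem_union, Finset.mem_inter, Finset.mem_compl]
    by_cases hj : j ∈ s <;> by_cases hN : j ∈ (sᶜ).biUnion N <;>
      simp [hj, hN, hs' j] <;> tauto
  have hdisj : Disjoint (((sᶜ).biUnion N) ∩ s) sᶜ := by
    rw [Finset.disjoint_left]
    intro a ha hc
    exact (Finset.mem_compl.1 hc) (Finset.mem_inter.1 ha).2
  have hsum1 : (∑ j ∈ ((sᶜ).biUnion N) ∩ s, nd j) + (∑ i ∈ sᶜ, nd i)
      = ∑ j ∈ (sᶜ).biUnion N, nd j := by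
    rw [← Finset.sum_union hdisj, hU]
  have hsum2 : (∑ j ∈ (sᶜ).biUnion N, nd j) + (∑ j ∈ ((sᶜ).biUnion N)ᶜ, nd j)
      = ∑ j, nd j := Finset.sum_add_sum_compl _ _
  rw [← hrM] at eM
  rw [← hrP] at eP
  rw [cM] at eM
  rw [cP] at eP
  omega
end AuxStmt18e

section AuxStmt18f
open Matrix Complex

lemma rank_submatrix_le_gen {R' C' Rt Ct : Type*} [Fintype R'] [Fintype C'] [Fintype Rt]
    [Fintype Ct] [DecidableEq Rt] [DecidableEq Ct]
    (Mt : Matrix Rt Ct ℂ) (f : R' → Rt) (g : C' → Ct) :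
    (Mt.submatrix f g).rank ≤ Mt.rank := by
  have hE : Mt.submatrix f g
      = (Matrix.of fun (r' : R') (r : Rt) => if r = f r' then (1 : ℂ) else 0) * Mt
        * (Matrix.of fun (c : Ct) (c' : C') => if c = g c' then (1 : ℂ) else 0) := by
    ext r' c'
    simp [Matrix.mul_apply, ite_mul, one_mul, zero_mul, mul_ite, mul_zero,
      Finset.sum_ite_eq', Finset.sum_ite_eq]
  rw [hE]
  exact le_trans (Matrix.rank_mul_le_left _ _) (Matrix.rank_mul_le_right _ _)

variable {n m : ℕ} {p q nd : Fin m → ℕ}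
  {A : Matrix (Fin n) (Fin n) ℝ}
  {B : ∀ i, Matrix (Fin n) (Fin (p i)) ℝ}
  {C : ∀ i, Matrix (Fin (q i)) (Fin n) ℝ}
  {lam : ℂ} {s : Finset (Fin m)}

lemma rank_pencil_ge_of_unit (h : IsUnit (lam • (1 : Matrix (Fin n) (Fin n) ℂ) - A.map ofReal)) :
    n ≤ (pencil p q A B C lam s).rank := by
  have hsub : (pencil p q A B C lam s).submatrix (Sum.inl : Fin n → _) (Sum.inl : Fin n → _)
      = lam • (1 : Matrix (Fin n) (Fin n) ℂ) - A.map ofReal := rfl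
  calc n = (lam • (1 : Matrix (Fin n) (Fin n) ℂ) - A.map ofReal).rank := by
        rw [Matrix.rank_of_isUnit _ h, Fintype.card_fin]
    _ = ((pencil p q A B C lam s).submatrix Sum.inl Sum.inl).rank := by rw [hsub]
    _ ≤ _ := rank_submatrix_le_gen _ _ _

lemma rank_pencil_ge_of_not_spectrum (h : lam ∉ spectrum ℂ (A.map Complex.ofReal)) :
    n ≤ (pencil p q A B C lam s).rank := by
  apply rank_pencil_ge_of_unit
  have := spectrum.notMem_iff.mp h
  rwa [Algebra.algebraMap_eq_smul_one] at this

end AuxStmt18f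

/-- For a jointly controllable, jointly observable system with a weakly
connected neighbor graph, bounded transmission delays and state holding (each
agent `j`'s state is measured with its maximal delay `D j` by all followers),
if the integrator dimensions satisfy the lower bound, then the state-held
lifted extended system has no fixed eigenvalues at all (including at `0`) if
and only if `N_{m−s} ∩ s ≠ ∅` for every subset `s` for which
`rank [λI − A, B_s; C_{m−s}, 0] < n` for some `λ ∈ σ(A)`. -/
theorem stmt18 {n m : ℕ} (p q nd : Fin m → ℕ)
    (A : Matrix (Fin n) (Fin n) ℝ)
    (B : ∀ i, Matrix (Fin n) (Fin (p i)) ℝ)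
    (C : ∀ i, Matrix (Fin (q i)) (Fin n) ℝ)
    (N : Fin m → Finset (Fin m))
    (D : Fin m → ℕ)
    (hself : ∀ i, i ∈ N i)
    -- weakly connected neighbor graph
    (hwc : ∀ i j, Relation.ReflTransGen (fun a b => a ∈ N b ∨ b ∈ N a) i j)
    -- joint controllability and joint observability
    (hctrb : ∀ lam : ℂ, (pencil p q A B C lam Finset.univ).rank = n)
    (hobs : ∀ lam : ℂ, (pencil p q A B C lam ∅).rank = n)
    -- n_i ≥ n − min_{s, λ ∈ σ(A)} rank [λI − A, B_s; C_{m−s}, 0]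
    (hbound : ∀ i, ∀ (s : Finset (Fin m)) (lam : ℂ),
      lam ∈ spectrum ℂ (A.map Complex.ofReal) →
      n - (pencil p q A B C lam s).rank ≤ nd i) :
    (∀ (lam : ℂ) (s : Finset (Fin m)),
        n + ∑ i, (D i + 1) * nd i ≤
          (liftPencil p q nd D A B C N (fun j _ => D j) lam s).rank) ↔
      ∀ s : Finset (Fin m),
        (∃ lam ∈ spectrum ℂ (A.map Complex.ofReal),
          (pencil p q A B C lam s).rank < n) →
        (((sᶜ).biUnion N) ∩ s).Nonempty := by
  have hrank : ∀ (lam : ℂ) (sset : Finset (Fin m)),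
      (liftPencil p q nd D A B C N (fun j _ => D j) lam sset).rank
        = (pencil p q A B C lam sset).rank + (∑ i, (D i + 1) * nd i)
          + ∑ j ∈ ((ssetᶜ).biUnion N) ∩ sset, nd j :=
    fun lam sset => rank_liftPencil_eq hself
  constructor
  · rintro hL sset ⟨lam, hspec, hlt⟩
    by_contra hempty
    rw [Finset.not_nonempty_iff_eq_empty] at hempty
    have hle := hL lam sset
    rw [hrank lam sset, hempty, Finset.sum_empty] at hle
    omega
  · intro hR lam sset
    rw [hrank lam sset]
    have h : n ≤ (pencil p q A B C lam sset).rank + ∑ j ∈ ((ssetᶜ).biUnion N) ∩ sset, nd j := by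
      by_cases hspec : lam ∈ spectrum ℂ (A.map Complex.ofReal)
      · by_cases hlt : (pencil p q A B C lam sset).rank < n
        · obtain ⟨j, hj⟩ := hR sset ⟨lam, hspec, hlt⟩
          have h1 := hbound j sset lam hspec
          have h2 : nd j ≤ ∑ j' ∈ ((ssetᶜ).biUnion N) ∩ sset, nd j' :=
            Finset.single_le_sum (fun _ _ => Nat.zero_le _) hj
          omega
        · omega
      · have := rank_pencil_ge_of_not_spectrum (p := p) (q := q) (B := B) (C := C)
          (s := sset) hspec
        omega
    omega
end

section
/- For the three-channel system with A = [[1,0,0],[0,1,0],[0,1,1]], B_1 = (1,0,0)ᵀ, B_2 = (0,1,0)ᵀ, B_3 = (1,0,0)ᵀ, C_1 = [[1,0,0],[0,0,1]], C_2 = C_3 = [0,1,0], and augmented output matrices C̄_1 = [C_1; C_2], C̄_2 = [C_2; C_3], C̄_3 = [C_3; C_1] (obtained from output-sharing along a directed 3-cycle), the matrix [I_3 − A, B_1, B_3; C̄_2, 0, 0] has rank 2 < 3; hence λ = 1 is a fixed eigenvalue of the augmented system {A, B_i, C̄_i; 3}, even though the original system is jointly controllable and jointly observable. -/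
/-!
Every rank bound comes from a witness. The rows of the fixed-mode pencil are
`(0,0,0,1,1)`, `0`, `(0,-1,0,0,0)`, `(0,1,0,0,0)`, `(0,1,0,0,0)`, so it factors through a
2-dimensional space, while its first and third rows against the columns of `B₁` and of the
second state give a nonsingular 2×2 minor. For the Hautus tests a single 3×3 minor works for every `s`: the columns of `B₁`, `B₂`
and the second column `(0, s - 1, -1)` of `sI - A` form a triangular matrix of determinant `-1`,
and the rows of `C₁` and `C₂` form the identity.
-/

open Matrix Complex

namespace Matrix

variable {K m n ι : Type*} [Field K] [Fintype n] [Fintype ι] [DecidableEq ι]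

theorem card_le_rank_of_isUnit_det_submatrix (A : Matrix m n K) (r : ι → m) (c : ι → n)
    (h : IsUnit (A.submatrix r c).det) : Fintype.card ι ≤ A.rank :=
  (rank_of_isUnit _ ((isUnit_iff_isUnit_det _).mpr h)).symm.le.trans (rank_submatrix_le A r c)

end Matrix

theorem rank_fixedModePencil_eq_two :
    (fromBlocks ((1 : Matrix (Fin 3) (Fin 3) ℝ) - !![1, 0, 0; 0, 1, 0; 0, 1, 1])
        (fromCols !![1; 0; 0] !![1; 0; 0]) (fromRows !![0, 1, 0] !![0, 1, 0])
        (0 : Matrix (Fin 1 ⊕ Fin 1) (Fin 1 ⊕ Fin 1) ℝ)).rank = 2 := by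
  set M := fromBlocks ((1 : Matrix (Fin 3) (Fin 3) ℝ) - !![1, 0, 0; 0, 1, 0; 0, 1, 1])
        (fromCols !![1; 0; 0] !![1; 0; 0]) (fromRows !![0, 1, 0] !![0, 1, 0])
        (0 : Matrix (Fin 1 ⊕ Fin 1) (Fin 1 ⊕ Fin 1) ℝ)
  have hfactor : M = fromRows (!![1, 0; 0, 0; 0, -1] : Matrix (Fin 3) (Fin 2) ℝ)
        (fromRows !![0, 1] !![0, 1]) *
      fromCols (!![0, 0, 0; 0, 1, 0] : Matrix (Fin 2) (Fin 3) ℝ) (fromCols !![1; 0] !![1; 0]) := by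
    ext (i | i | i) (j | j | j) <;> fin_cases i <;> fin_cases j <;>
      simp [M, mul_apply, Fin.sum_univ_two, one_apply]
  apply le_antisymm
  · calc M.rank ≤ _ := hfactor ▸ rank_mul_le_left _ _
      _ ≤ 2 := rank_le_card_width _ |>.trans_eq (Fintype.card_fin 2)
  · simpa using M.card_le_rank_of_isUnit_det_submatrix ![.inl 0, .inl 2] ![.inr (.inl 0), .inl 1]
      (by rw [det_fin_two]; simp [M, one_apply])

theorem rank_controllabilityPencil_eq_three (s : ℂ) :
    (fromCols (s • (1 : Matrix (Fin 3) (Fin 3) ℂ) -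
        (!![1, 0, 0; 0, 1, 0; 0, 1, 1] : Matrix (Fin 3) (Fin 3) ℝ).map ofReal)
      (fromCols ((!![1; 0; 0] : Matrix (Fin 3) (Fin 1) ℝ).map ofReal)
        (fromCols ((!![0; 1; 0] : Matrix (Fin 3) (Fin 1) ℝ).map ofReal)
          ((!![1; 0; 0] : Matrix (Fin 3) (Fin 1) ℝ).map ofReal)))).rank = 3 := by
  refine le_antisymm (rank_le_card_height _ |>.trans_eq (Fintype.card_fin 3)) ?_
  simpa using card_le_rank_of_isUnit_det_submatrix _ id
    ![.inr (.inl 0), .inr (.inr (.inl 0)), .inl 1] (by simp [det_fin_three, one_apply])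

theorem rank_observabilityPencil_eq_three (s : ℂ) :
    (fromRows (s • (1 : Matrix (Fin 3) (Fin 3) ℂ) -
        (!![1, 0, 0; 0, 1, 0; 0, 1, 1] : Matrix (Fin 3) (Fin 3) ℝ).map ofReal)
      (fromRows ((!![1, 0, 0; 0, 0, 1] : Matrix (Fin 2) (Fin 3) ℝ).map ofReal)
        (fromRows ((!![0, 1, 0] : Matrix (Fin 1) (Fin 3) ℝ).map ofReal)
          ((!![0, 1, 0] : Matrix (Fin 1) (Fin 3) ℝ).map ofReal)))).rank = 3 := by
  refine le_antisymm (rank_le_card_width _ |>.trans_eq (Fintype.card_fin 3)) ?_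
  simpa using card_le_rank_of_isUnit_det_submatrix _
    ![.inr (.inl 0), .inr (.inr (.inl 0)), .inr (.inl 1)] id (by rw [det_fin_three]; simp)

/-- For the concrete three-channel example with output sharing along a directed
3-cycle: the pencil `[I₃ − A, B₁, B₃; C̄₂, 0, 0]` (with `C̄₂ = [C₂; C₃]`) has
rank `2 < 3`, so `λ = 1` is a fixed eigenvalue of the augmented system, even
though the original system is jointly controllable and jointly observable
(verified by the Hautus tests over `ℂ`). -/
theorem stmt19 :
    let A : Matrix (Fin 3) (Fin 3) ℝ := !![1, 0, 0; 0, 1, 0; 0, 1, 1]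
    let B1 : Matrix (Fin 3) (Fin 1) ℝ := !![1; 0; 0]
    let B2 : Matrix (Fin 3) (Fin 1) ℝ := !![0; 1; 0]
    let B3 : Matrix (Fin 3) (Fin 1) ℝ := !![1; 0; 0]
    let C1 : Matrix (Fin 2) (Fin 3) ℝ := !![1, 0, 0; 0, 0, 1]
    let C2 : Matrix (Fin 1) (Fin 3) ℝ := !![0, 1, 0]
    let C3 : Matrix (Fin 1) (Fin 3) ℝ := !![0, 1, 0]
    -- the fixed-mode pencil at λ = 1 for the subset s = {1, 3}
    (fromBlocks ((1 : Matrix (Fin 3) (Fin 3) ℝ) - A) (fromCols B1 B3)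
        (fromRows C2 C3) (0 : Matrix (Fin 1 ⊕ Fin 1) (Fin 1 ⊕ Fin 1) ℝ)).rank = 2 ∧
      (2 : ℕ) < 3 ∧
      -- joint controllability of the original system
      (∀ s : ℂ,
        (fromCols (s • (1 : Matrix (Fin 3) (Fin 3) ℂ) - A.map ofReal)
          (fromCols (B1.map ofReal)
            (fromCols (B2.map ofReal) (B3.map ofReal)))).rank = 3) ∧
      -- joint observability of the original system
      (∀ s : ℂ,
        (fromRows (s • (1 : Matrix (Fin 3) (Fin 3) ℂ) - A.map ofReal)
          (fromRows (C1.map ofReal)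
            (fromRows (C2.map ofReal) (C3.map ofReal)))).rank = 3) := by
  intro A B1 B2 B3 C1 C2 C3
  exact ⟨rank_fixedModePencil_eq_two, by norm_num, rank_controllabilityPencil_eq_three,
    rank_observabilityPencil_eq_three⟩
end
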